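/- arXiv:0901.3104 — 6 statements merged into one kernel-verified Lean document; each statement's English description precedes it below -/
import Mathlib

section
/- The rule π^q(σ_{i,i+1}) g(u_1,...,u_n) = ((q^{-1}u_{i+1} - q u_i)/(q u_{i+1} - q^{-1} u_i)) · g(u_1,...,u_{i+1},u_i,...,u_n), defined on the elementary transpositions σ_{i,i+1}, extends to a well-defined action of the symmetric group S_n on rational functions of u_1,...,u_n, i.e., the operators π^q(σ_{i,i+1}) satisfy the braid relations and the involution relation π^q(σ_{i,i+1})² = id. -/
/-!
`π^q(σ_{i,i+1})` is the transposition of `u_i, u_{i+1}` weighted by `c(u_i, u_{i+1})`, where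
`c(x, y) = (q⁻¹ y - q x) / (q y - q⁻¹ x)`, and this makes sense for any pair of variables.
A word in these operators acts by the corresponding permutation of the variables, weighted by
the product of the factors `c(u_a, u_b)` over the pairs `a, b` it inverts. The two sides of a
braid or distant commutation relation have the same permutation and invert the same pairs, so
they agree identically. For the involution relation the permutation is trivial and the weight is
`c(x, y) c(y, x)`, which is `1` at generic points because the numerator of each factor is minus
the denominator of the other.
-/

/-- The operator `π^q(σ_{i,i+1})` acting on functions of `u_1, ..., u_n`:
`(π^q(σ_{i,i+1}) g)(u) = ((q⁻¹ u_{i+1} - q u_i)/(q u_{i+1} - q⁻¹ u_i)) · g(..., u_{i+1}, u_i, ...)`. -/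
noncomputable def piQ (n : ℕ) (q : ℂ) (i : ℕ) (g : (Fin n → ℂ) → ℂ) : (Fin n → ℂ) → ℂ :=
  fun u =>
    if h : i + 1 < n then
      ((q⁻¹ * u ⟨i + 1, h⟩ - q * u ⟨i, Nat.lt_of_succ_lt h⟩) /
          (q * u ⟨i + 1, h⟩ - q⁻¹ * u ⟨i, Nat.lt_of_succ_lt h⟩)) *
        g (u ∘ ⇑(Equiv.swap (⟨i, Nat.lt_of_succ_lt h⟩ : Fin n) ⟨i + 1, h⟩))
    else g u

section SwapOp

variable {K ι : Type*} [Field K] [DecidableEq ι]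

def swapFactor (q x y : K) : K :=
  (q⁻¹ * y - q * x) / (q * y - q⁻¹ * x)

theorem swapFactor_mul_swapFactor {q x y : K} (hxy : q * y - q⁻¹ * x ≠ 0)
    (hyx : q * x - q⁻¹ * y ≠ 0) : swapFactor q x y * swapFactor q y x = 1 := by
  rw [swapFactor, swapFactor, div_mul_div_comm, div_eq_one_iff_eq (mul_ne_zero hxy hyx)]
  ring

def swapOp (q : K) (a b : ι) (g : (ι → K) → K) : (ι → K) → K :=
  fun u => swapFactor q (u a) (u b) * g (u ∘ Equiv.swap a b)

theorem swapOp_swapOp_self (q : K) (a b : ι) (g : (ι → K) → K) {u : ι → K}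
    (hab : q * u b - q⁻¹ * u a ≠ 0) (hba : q * u a - q⁻¹ * u b ≠ 0) :
    swapOp q a b (swapOp q a b g) u = g u := by
  have hu : u ∘ Equiv.swap a b ∘ Equiv.swap a b = u := by
    ext x
    simp
  simp only [swapOp, Function.comp_apply, Equiv.swap_apply_left, Equiv.swap_apply_right,
    Function.comp_assoc, hu, ← mul_assoc, swapFactor_mul_swapFactor hab hba, one_mul]

theorem swapOp_comm (q : K) {a b c d : ι} (hac : a ≠ c) (had : a ≠ d) (hbc : b ≠ c)
    (hbd : b ≠ d) (g : (ι → K) → K) :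
    swapOp q a b (swapOp q c d g) = swapOp q c d (swapOp q a b g) := by
  have hswap : Equiv.swap a b ∘ Equiv.swap c d = Equiv.swap c d ∘ Equiv.swap a b := by
    ext x
    simp only [Function.comp_apply, Equiv.swap_apply_def]
    split_ifs <;> simp_all
  funext u
  simp only [swapOp, Function.comp_apply, Equiv.swap_apply_of_ne_of_ne hac.symm hbc.symm,
    Equiv.swap_apply_of_ne_of_ne had.symm hbd.symm, Equiv.swap_apply_of_ne_of_ne hac had,
    Equiv.swap_apply_of_ne_of_ne hbc hbd, Function.comp_assoc, hswap]
  ring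

theorem swapOp_braid (q : K) {a b c : ι} (hab : a ≠ b) (hac : a ≠ c) (hbc : b ≠ c)
    (g : (ι → K) → K) :
    swapOp q a b (swapOp q b c (swapOp q a b g)) =
      swapOp q b c (swapOp q a b (swapOp q b c g)) := by
  have hswap : ⇑(Equiv.swap a b * Equiv.swap b c * Equiv.swap a b) =
      ⇑(Equiv.swap b c * Equiv.swap a b * Equiv.swap b c) := by
    rw [Equiv.swap_comm a b, Equiv.swap_comm b c, Equiv.swap_mul_swap_mul_swap hbc.symm hac.symm,
      Equiv.swap_comm c b, Equiv.swap_comm b a, Equiv.swap_mul_swap_mul_swap hab hac,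
      Equiv.swap_comm]
  funext u
  simp only [Equiv.Perm.coe_mul] at hswap
  simp only [swapOp, Function.comp_apply, Equiv.swap_apply_left, Equiv.swap_apply_right,
    Equiv.swap_apply_of_ne_of_ne hac.symm hbc.symm, Equiv.swap_apply_of_ne_of_ne hab hac,
    Function.comp_assoc, hswap]
  ring

end SwapOp

theorem piQ_eq_swapOp {n : ℕ} (q : ℂ) {i : ℕ} (h : i + 1 < n) :
    piQ n q i = swapOp q (⟨i, Nat.lt_of_succ_lt h⟩ : Fin n) ⟨i + 1, h⟩ := by
  funext g u
  simp only [piQ, dif_pos h, swapOp, swapFactor]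

theorem piQ_is_action_general (n : ℕ) (q : ℂ)
    (g : (Fin n → ℂ) → ℂ) (u : Fin n → ℂ)
    (hgen : ∀ j k : Fin n, j ≠ k → q * u j - q⁻¹ * u k ≠ 0) :
    (∀ i : ℕ, i + 1 < n → piQ n q i (piQ n q i g) u = g u) ∧
    (∀ i : ℕ, i + 2 < n →
      piQ n q i (piQ n q (i + 1) (piQ n q i g)) u =
        piQ n q (i + 1) (piQ n q i (piQ n q (i + 1) g)) u) ∧
    (∀ i j : ℕ, i + 1 < n → j + 1 < n → i + 1 < j →
      piQ n q i (piQ n q j g) u = piQ n q j (piQ n q i g) u) := by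
  refine ⟨fun i h => ?_, fun i h => ?_, fun i j hi hj hij => ?_⟩
  · have hne : (⟨i, Nat.lt_of_succ_lt h⟩ : Fin n) ≠ ⟨i + 1, h⟩ := by simp
    rw [piQ_eq_swapOp q h]
    exact swapOp_swapOp_self q _ _ g (hgen _ _ hne.symm) (hgen _ _ hne)
  · rw [piQ_eq_swapOp q (show i + 1 < n by omega), piQ_eq_swapOp q (show i + 1 + 1 < n by omega),
      swapOp_braid q (by simp) (by simp; omega) (by simp)]
  · rw [piQ_eq_swapOp q hi, piQ_eq_swapOp q hj,
      swapOp_comm q (by simp; omega) (by simp; omega) (by simp; omega) (by simp; omega)]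

/-- The rule `π^q(σ_{i,i+1})` extends to a well-defined action of the symmetric group `S_n`
on rational functions of `u_1,...,u_n`: at every generic point the operators
`π^q(σ_{i,i+1})` satisfy the involution relation, the braid relations, and the
commutation relations for distant transpositions. -/
theorem piQ_is_action (n : ℕ) (q : ℂ) (hq : q ≠ 0) (hq2 : q ^ 2 ≠ 1)
    (g : (Fin n → ℂ) → ℂ) (u : Fin n → ℂ)
    (hgen : ∀ j k : Fin n, j ≠ k → q * u j - q⁻¹ * u k ≠ 0) :
    (∀ i : ℕ, i + 1 < n → piQ n q i (piQ n q i g) u = g u) ∧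
    (∀ i : ℕ, i + 2 < n →
      piQ n q i (piQ n q (i + 1) (piQ n q i g)) u =
        piQ n q (i + 1) (piQ n q i (piQ n q (i + 1) g)) u) ∧
    (∀ i j : ℕ, i + 1 < n → j + 1 < n → i + 1 < j →
      piQ n q i (piQ n q j g) u = piQ n q j (piQ n q i g) u) :=
  piQ_is_action_general n q g u hgen
end

section
/- If g(u_1,...,u_n) is q-symmetric, i.e. invariant under the action π^q of S_n defined by π^q(σ_{i,i+1})g(u) = ((q^{-1}u_{i+1}-qu_i)/(qu_{i+1}-q^{-1}u_i)) g(...,u_{i+1},u_i,...), then the function ∏_{k>j} ((qu_k - q^{-1}u_j)/(u_k - u_j)) · g(u_1,...,u_n) is symmetric under all permutations of u_1,...,u_n. -/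
/-- The prefactor `∏_{k>j} (q u_k - q⁻¹ u_j)/(u_k - u_j)`. -/
noncomputable def qSymFactor (n : ℕ) (q : ℂ) (u : Fin n → ℂ) : ℂ :=
  ∏ p ∈ Finset.univ.filter (fun p : Fin n × Fin n => p.1 < p.2),
    (q * u p.2 - q⁻¹ * u p.1) / (u p.2 - u p.1)

/-!
Both `g` and the prefactor transform under an adjacent transposition `s = (i i+1)` by the same
scalar, in opposite directions: `s` permutes the pairs `j < k` except that it turns `(i, i+1)`
into `(i+1, i)`, so the prefactor of `u ∘ s` differs from that of `u` only in one factor, and the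
ratio of the two factors is exactly the cocycle in the definition of `q`-symmetry. Adjacent
transpositions generate `Sₙ`.
-/

open Equiv Finset

theorem CovBy.swap_lt_swap_iff {ι : Type*} [LinearOrder ι] {a b : ι} (hab : a ⋖ b) (x y : ι) :
    swap a b x < swap a b y ↔ (x < y ∧ (x, y) ≠ (a, b)) ∨ (x, y) = (b, a) := by
  have above (z : ι) (hz : z ≠ b) : b < z ↔ a < z :=
    ⟨hab.lt.trans, fun h => (hab.ge_of_gt h).lt_of_ne hz.symm⟩
  have below (z : ι) (hz : z ≠ a) : z < a ↔ z < b :=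
    ⟨(·.trans hab.lt), fun h => (hab.le_of_lt h).lt_of_ne hz⟩
  rcases eq_or_ne x a with hxa | hxa <;> rcases eq_or_ne x b with hxb | hxb <;>
    rcases eq_or_ne y a with hya | hya <;> rcases eq_or_ne y b with hyb | hyb <;>
    simp_all [swap_apply_of_ne_of_ne, hab.lt]

theorem Fin.castSucc_covBy_succ {n : ℕ} (i : Fin n) : i.castSucc ⋖ i.succ :=
  Fin.orderSucc_castSucc i ▸ Order.covBy_succ_of_not_isMax i.castSucc_lt_succ.not_isMax

theorem Finset.mul_prod_filter_lt_swap_of_covBy {ι M : Type*} [Fintype ι] [LinearOrder ι]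
    [CommMonoid M] {a b : ι} (hab : a ⋖ b) (f : ι × ι → M) :
    f (a, b) * ∏ p : ι × ι with p.1 < p.2, f (swap a b p.1, swap a b p.2) =
      f (b, a) * ∏ p : ι × ι with p.1 < p.2, f p := by
  set P : Finset (ι × ι) := {p | p.1 < p.2}
  let e : ι × ι ≃ ι × ι := (swap a b).prodCongr (swap a b)
  have hmap : P.map e.toEmbedding = insert (b, a) (P.erase (a, b)) := by
    ext ⟨x, y⟩
    simp only [P, e, mem_map_equiv, prodCongr_symm, symm_swap, prodCongr_apply, Prod.map_apply,
      mem_filter, mem_univ, hab.swap_lt_swap_iff, ne_eq, Prod.mk.injEq, mem_insert, mem_erase,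
      true_and]
    tauto
  have hba : (b, a) ∉ P.erase (a, b) := by simp [P, hab.lt.le]
  have hab' : (a, b) ∈ P := by simp [P, hab.lt]
  calc f (a, b) * ∏ p ∈ P, f (e p)
      = f (a, b) * (f (b, a) * ∏ p ∈ P.erase (a, b), f p) := by
        rw [← prod_insert hba, ← hmap, prod_map]; rfl
    _ = f (b, a) * ∏ p ∈ P, f p := by rw [mul_left_comm, mul_prod_erase P f hab']

theorem qSymFactor_comp_swap {n : ℕ} {q : ℂ} {u : Fin n → ℂ} {a b : Fin n} (hab : a ⋖ b)
    (hu : u a ≠ u b) (hq : q * u b - q⁻¹ * u a ≠ 0) :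
    qSymFactor n q (u ∘ swap a b) =
      (q⁻¹ * u b - q * u a) / (q * u b - q⁻¹ * u a) * qSymFactor n q u := by
  have hratio : (q * u b - q⁻¹ * u a) / (u b - u a) *
      ((q⁻¹ * u b - q * u a) / (q * u b - q⁻¹ * u a)) = (q * u a - q⁻¹ * u b) / (u a - u b) := by
    rw [mul_comm, div_mul_div_cancel₀ hq, ← neg_sub, ← neg_sub (u a), neg_div_neg_eq]
  refine mul_left_cancel₀ (div_ne_zero hq (sub_ne_zero.2 hu.symm)) ?_
  calc _ = (q * u a - q⁻¹ * u b) / (u a - u b) * qSymFactor n q u :=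
        mul_prod_filter_lt_swap_of_covBy hab fun p => (q * u p.2 - q⁻¹ * u p.1) / (u p.2 - u p.1)
    _ = _ := by rw [← mul_assoc, hratio]

theorem Equiv.Perm.apply_comp_eq_of_swap_castSucc_succ {α β : Type*} {m : ℕ}
    {S : Set (Fin (m + 1) → α)} (hS : ∀ σ : Perm (Fin (m + 1)), ∀ u ∈ S, u ∘ σ ∈ S)
    {F : (Fin (m + 1) → α) → β}
    (hF : ∀ i : Fin m, ∀ u ∈ S, F (u ∘ swap i.castSucc i.succ) = F u) (σ : Perm (Fin (m + 1))) :
    ∀ u ∈ S, F (u ∘ σ) = F u := by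
  have hσ : σ ∈ Submonoid.closure (Set.range fun i : Fin m => swap i.castSucc i.succ) := by
    rw [mclosure_swap_castSucc_succ]; trivial
  induction hσ using Submonoid.closure_induction with
  | one => exact fun _ _ => rfl
  | mem _ h => obtain ⟨i, rfl⟩ := h; exact hF i
  | mul x y _ _ hx hy => exact fun u hu => (hy (u ∘ x) (hS x u hu)).trans (hx u hu)

theorem qsym_implies_symmetric_general (n : ℕ) (q : ℂ)
    (g : (Fin n → ℂ) → ℂ)
    (hg : ∀ (i : ℕ) (h : i + 1 < n) (u : Fin n → ℂ),
      (∀ j k : Fin n, j ≠ k → u j ≠ u k ∧ q * u j - q⁻¹ * u k ≠ 0) →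
      g u = ((q⁻¹ * u ⟨i + 1, h⟩ - q * u ⟨i, Nat.lt_of_succ_lt h⟩) /
              (q * u ⟨i + 1, h⟩ - q⁻¹ * u ⟨i, Nat.lt_of_succ_lt h⟩)) *
            g (u ∘ ⇑(Equiv.swap (⟨i, Nat.lt_of_succ_lt h⟩ : Fin n) ⟨i + 1, h⟩))) :
    ∀ (σ : Equiv.Perm (Fin n)) (u : Fin n → ℂ),
      (∀ j k : Fin n, j ≠ k → u j ≠ u k ∧ q * u j - q⁻¹ * u k ≠ 0) →
      qSymFactor n q (u ∘ ⇑σ) * g (u ∘ ⇑σ) = qSymFactor n q u * g u := by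
  intro σ u hu
  cases n with
  | zero => rw [Subsingleton.elim (u ∘ σ) u]
  | succ m =>
    refine Perm.apply_comp_eq_of_swap_castSucc_succ
      (S := {u | Pairwise fun j k => u j ≠ u k ∧ q * u j - q⁻¹ * u k ≠ 0})
      (F := fun u => qSymFactor _ q u * g u)
      (fun σ u hu => hu.comp_of_injective σ.injective) ?_ σ u hu
    intro i v hv
    have hne := hv i.castSucc_lt_succ.ne'
    have hgv : g v = (q⁻¹ * v i.succ - q * v i.castSucc) / (q * v i.succ - q⁻¹ * v i.castSucc) *
        g (v ∘ swap i.castSucc i.succ) := hg i (by omega) v hv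
    rw [qSymFactor_comp_swap i.castSucc_covBy_succ hne.1.symm hne.2, mul_comm (_ / _),
      mul_assoc, ← hgv]

/-- If `g` is `q`-symmetric, i.e. invariant under the twisted action
`π^q(σ_{i,i+1}) g(u) = ((q⁻¹u_{i+1} - q u_i)/(q u_{i+1} - q⁻¹ u_i)) g(...,u_{i+1},u_i,...)`,
then `∏_{k>j} ((q u_k - q⁻¹ u_j)/(u_k - u_j)) · g(u)` is symmetric under all
permutations of `u_1,...,u_n` (as an identity at generic points). -/
theorem qsym_implies_symmetric (n : ℕ) (q : ℂ) (hq : q ≠ 0) (hq2 : q ^ 2 ≠ 1)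
    (g : (Fin n → ℂ) → ℂ)
    (hg : ∀ (i : ℕ) (h : i + 1 < n) (u : Fin n → ℂ),
      (∀ j k : Fin n, j ≠ k → u j ≠ u k ∧ q * u j - q⁻¹ * u k ≠ 0) →
      g u = ((q⁻¹ * u ⟨i + 1, h⟩ - q * u ⟨i, Nat.lt_of_succ_lt h⟩) /
              (q * u ⟨i + 1, h⟩ - q⁻¹ * u ⟨i, Nat.lt_of_succ_lt h⟩)) *
            g (u ∘ ⇑(Equiv.swap (⟨i, Nat.lt_of_succ_lt h⟩ : Fin n) ⟨i + 1, h⟩))) :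
    ∀ (σ : Equiv.Perm (Fin n)) (u : Fin n → ℂ),
      (∀ j k : Fin n, j ≠ k → u j ≠ u k ∧ q * u j - q⁻¹ * u k ≠ 0) →
      qSymFactor n q (u ∘ ⇑σ) * g (u ∘ ⇑σ) = qSymFactor n q u * g u :=
  qsym_implies_symmetric_general n q g hg
end

section
/- Let P₁, P₂ ∈ Θ_n(χ) with χ(1) = (-1)^n and χ(τ) = (-1)^n e^{2πiα}, and let u_1,...,u_n be points with u_i - u_j ∉ Γ for i ≠ j and Σ_k u_k - α ∉ Γ. If P₁(u_i) = P₂(u_i) for all i = 1,...,n, then P₁ = P₂ identically. -/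
/-!
Put `Q = P₁ - P₂ ∈ Θ_n(χ)`; it vanishes on every `u_i + Γ`. With `q = e(τ)`, the product
`θ(w) = e(-w/2) (e(w); q)_∞ (q e(-w); q)_∞` is an entire function with simple zeros exactly at `Γ`
and `θ(w + τ) = -e(-τ/2 - w) θ(w)`. Hence `D(w) = ∏ θ(w - u_i)` has simple zeros exactly on
`⋃ (u_i + Γ)` (the `u_i` being distinct mod `Γ`), and `R = Q / D` is entire, `1`-periodic and
`R(w + τ) = μ R(w)` with `μ = e(α - Σ u_i)`. Twisting by some `e(m w)` brings `|μ|` into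
`[|q|, 1]`; then `R`, as a function of `e(w)`, extends to an entire function with at most a simple
pole at `∞`, i.e. an affine one, and the functional equation forces it to vanish since
`μ ∉ e(ℤτ)`, which is the condition `Σ u_i - α ∉ Γ`.
-/

open Complex Filter Function Topology
open scoped Real

noncomputable section

namespace ThetaPoly

def e (z : ℂ) : ℂ := exp (2 * π * I * z)

lemma e_ne_zero (z : ℂ) : e z ≠ 0 := exp_ne_zero _

lemma e_add (z w : ℂ) : e (z + w) = e z * e w := by
  rw [e, e, e, ← exp_add, mul_add]

lemma e_neg (z : ℂ) : e (-z) = (e z)⁻¹ := by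
  rw [e, e, ← exp_neg, mul_neg]

lemma e_sub (z w : ℂ) : e (z - w) = e z / e w := by
  rw [sub_eq_add_neg, e_add, e_neg, div_eq_mul_inv]

lemma e_zero : e 0 = 1 := by simp [e]

lemma e_intCast_mul (m : ℤ) (z : ℂ) : e (m * z) = e z ^ m := by
  rw [e, e, ← exp_int_mul]; ring_nf

lemma e_natCast_mul (m : ℕ) (z : ℂ) : e (m * z) = e z ^ m := by
  exact_mod_cast e_intCast_mul m z

lemma e_sum {ι : Type*} (s : Finset ι) (x : ι → ℂ) : e (∑ i ∈ s, x i) = ∏ i ∈ s, e (x i) := by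
  rw [e, Finset.mul_sum, exp_sum]; rfl

lemma e_eq_one_iff (z : ℂ) : e z = 1 ↔ ∃ m : ℤ, z = m := by
  rw [e, exp_eq_one_iff]
  refine exists_congr fun m ↦ ⟨fun h ↦ ?_, fun h ↦ by rw [h]; ring⟩
  exact mul_left_cancel₀ two_pi_I_ne_zero (by rw [h]; ring)

lemma e_add_intCast (z : ℂ) (m : ℤ) : e (z + m) = e z := by
  rw [e_add, (e_eq_one_iff _).2 ⟨m, rfl⟩, mul_one]

lemma e_intCast (m : ℤ) : e m = 1 := by
  simpa [e_zero] using e_add_intCast 0 m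

lemma e_neg_half : e (-1 / 2) = -1 := by
  rw [e, show 2 * π * I * (-1 / 2) = -(π * I) by ring, exp_neg, exp_pi_mul_I]
  norm_num

lemma norm_e (z : ℂ) : ‖e z‖ = Real.exp (-2 * π * z.im) := by
  simp [e, norm_exp, mul_re, mul_im]

lemma norm_e_lt_one {τ : ℂ} (hτ : 0 < τ.im) : ‖e τ‖ < 1 := by
  rw [norm_e, Real.exp_lt_one_iff]; nlinarith [Real.pi_pos]

lemma hasDerivAt_e (z : ℂ) : HasDerivAt e (2 * π * I * e z) z := by
  have h := ((hasDerivAt_id z).const_mul (2 * π * I)).cexp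
  simp only [id, mul_one] at h
  rw [mul_comm]
  exact h

@[fun_prop]
lemma differentiable_e : Differentiable ℂ e := fun z ↦ (hasDerivAt_e z).differentiableAt

lemma e_eq_qParam : e = Periodic.qParam 1 := by
  ext z; simp [e, Periodic.qParam]

def lattice (τ : ℂ) : Submodule ℤ ℂ := Submodule.span ℤ {1, τ}

lemma mem_lattice {τ w : ℂ} : w ∈ lattice τ ↔ ∃ a b : ℤ, w = a + b * τ := by
  simp only [lattice, Submodule.mem_span_pair, zsmul_eq_mul, mul_one, eq_comm]

lemma one_mem_lattice (τ : ℂ) : (1 : ℂ) ∈ lattice τ := Submodule.subset_span (by simp)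

lemma self_mem_lattice (τ : ℂ) : τ ∈ lattice τ := Submodule.subset_span (by simp)

lemma intCast_mem_lattice (τ : ℂ) (m : ℤ) : (m : ℂ) ∈ lattice τ := by
  simpa using (lattice τ).smul_mem m (one_mem_lattice τ)

lemma mem_lattice_of_e_eq_one {τ z : ℂ} (h : e z = 1) : z ∈ lattice τ := by
  obtain ⟨m, rfl⟩ := (e_eq_one_iff z).1 h
  exact intCast_mem_lattice τ m

lemma periodic_of_lattice {α : Type*} {τ : ℂ} {P : ℂ → α} (h₁ : Periodic P 1)
    (hτ : Periodic P τ) {l : ℂ} (hl : l ∈ lattice τ) : Periodic P l := by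
  obtain ⟨a, b, rfl⟩ := mem_lattice.1 hl
  simpa using (h₁.int_mul a).add_period (hτ.int_mul b)

section qPochhammer

variable {q : ℂ}

def qPochhammer (q x : ℂ) : ℂ := ∏' k : ℕ, (1 - x * q ^ k)

lemma summable_norm_mul_pow (hq : ‖q‖ < 1) (x : ℂ) : Summable fun k : ℕ ↦ ‖x * q ^ k‖ := by
  simpa [norm_mul, norm_pow] using
    (summable_geometric_of_lt_one (norm_nonneg q) hq).mul_left ‖x‖

lemma multipliable_one_sub_mul_pow (hq : ‖q‖ < 1) (x : ℂ) :
    Multipliable fun k : ℕ ↦ 1 - x * q ^ k := by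
  simpa only [← sub_eq_add_neg] using
    multipliable_one_add_of_summable (f := fun k : ℕ ↦ -(x * q ^ k))
      (by simpa only [norm_neg] using summable_norm_mul_pow hq x)

lemma qPochhammer_eq_mul (hq : ‖q‖ < 1) (x : ℂ) :
    qPochhammer q x = (1 - x) * qPochhammer q (q * x) := by
  have hshift : ∀ k : ℕ, 1 - q * x * q ^ k = 1 - x * q ^ (k + 1) := fun k ↦ by ring
  rw [qPochhammer, tprod_eq_zero_mul' ((multipliable_one_sub_mul_pow hq (q * x)).congr hshift),
    qPochhammer, pow_zero, mul_one, tprod_congr hshift]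

lemma qPochhammer_eq_zero_iff (hq : ‖q‖ < 1) (x : ℂ) :
    qPochhammer q x = 0 ↔ ∃ k : ℕ, x * q ^ k = 1 := by
  refine ⟨fun h ↦ ?_, fun ⟨k, hk⟩ ↦ tprod_of_exists_eq_zero ⟨k, by rw [hk, sub_self]⟩⟩
  by_contra! hne
  rw [qPochhammer] at h
  refine tprod_one_add_ne_zero_of_summable (f := fun k : ℕ ↦ -(x * q ^ k))
    (fun k ↦ ?_) (by simpa only [norm_neg] using summable_norm_mul_pow hq x)
    (by simpa only [sub_eq_add_neg] using h)
  rw [← sub_eq_add_neg, sub_ne_zero]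
  exact (hne k).symm

lemma differentiable_qPochhammer (hq : ‖q‖ < 1) : Differentiable ℂ (qPochhammer q) := by
  intro x
  have hprod := Summable.hasProdLocallyUniformlyOn_nat_one_add (f := fun k y ↦ -(y * q ^ k))
    Metric.isOpen_ball ((summable_geometric_of_lt_one (norm_nonneg q) hq).mul_left (‖x‖ + 1))
    (.of_forall fun k y hy ↦ by
      rw [norm_neg, norm_mul, norm_pow]
      exact mul_le_mul_of_nonneg_right (mem_ball_zero_iff.1 hy).le (by positivity))
    (fun k ↦ by fun_prop)
  have hdiff := hprod.differentiableOn (.of_forall fun s ↦ by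
    simpa [Finset.prod_fn] using DifferentiableOn.finsetProd (fun k _ ↦ by fun_prop))
    Metric.isOpen_ball
  simp only [← sub_eq_add_neg] at hdiff
  exact hdiff.differentiableAt (Metric.isOpen_ball.mem_nhds (by simp))

end qPochhammer

section SimpleZeros

def HasSimpleZeros (g : ℂ → ℂ) : Prop := ∀ z, g z = 0 → deriv g z ≠ 0

variable {f g : ℂ → ℂ}

lemma differentiable_dslope (hf : Differentiable ℂ f) (c : ℂ) : Differentiable ℂ (dslope f c) :=
  differentiableOn_univ.1 ((Complex.differentiableOn_dslope univ_mem).2 hf.differentiableOn)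

lemma HasSimpleZeros.eventually_ne_zero (hg : HasSimpleZeros g) (hgd : Differentiable ℂ g)
    (z : ℂ) : ∀ᶠ w in 𝓝[≠] z, g w ≠ 0 := by
  by_cases hz : g z = 0
  · simpa [hz] using (hgd z).hasDerivAt.eventually_ne (c := g z) (hg z hz)
  · exact eventually_nhdsWithin_of_eventually_nhds ((hgd z).continuousAt.eventually_ne hz)

lemma HasSimpleZeros.eq_zero_of_mul_eq_zero (hg : HasSimpleZeros g) (hgd : Differentiable ℂ g)
    {k : ℂ → ℂ} (hk : Continuous k) (h : ∀ w, g w * k w = 0) : k = 0 := by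
  funext z
  have hk0 : ∀ᶠ w in 𝓝[≠] z, k w = 0 := (hg.eventually_ne_zero hgd z).mono fun w hw ↦
    (mul_eq_zero.1 (h w)).resolve_left hw
  exact tendsto_nhds_unique (hk.continuousAt.tendsto.mono_left nhdsWithin_le_nhds)
    (tendsto_const_nhds.congr' (hk0.mono fun w hw ↦ hw.symm))

lemma HasSimpleZeros.exists_eq_mul (hg : HasSimpleZeros g) (hgd : Differentiable ℂ g)
    (hfd : Differentiable ℂ f) (hfg : ∀ z, g z = 0 → f z = 0) :
    ∃ h : ℂ → ℂ, Differentiable ℂ h ∧ ∀ w, f w = g w * h w := by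
  classical
  refine ⟨fun z ↦ if g z = 0 then deriv f z / deriv g z else f z / g z, fun p ↦ ?_, fun w ↦ ?_⟩
  · by_cases hp : g p = 0
    · -- near a zero `p`, `f / g` is the quotient of the difference quotients at `p`
      refine ((differentiable_dslope hfd p p).div (differentiable_dslope hgd p p)
        (by rw [dslope_same]; exact hg p hp)) |>.congr_of_eventuallyEq ?_
      filter_upwards [eventually_nhdsWithin_iff.1 (hg.eventually_ne_zero hgd p)] with z hz
      rcases eq_or_ne z p with rfl | hzp
      · simp [hp]
      · simp only [Pi.div_apply, hz hzp, if_false, dslope_of_ne _ hzp, slope_def_field, hp,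
          hfg p hp, sub_zero]
        field_simp [sub_ne_zero.2 hzp]
    · refine ((hfd p).div (hgd p) hp).congr_of_eventuallyEq ?_
      filter_upwards [(hgd p).continuousAt.eventually_ne hp] with z hz
      simp [hz]
  · by_cases hw : g w = 0
    · simp [hw, hfg w hw]
    · simp [hw, mul_div_cancel₀]

lemma HasSimpleZeros.comp_sub_const (hg : HasSimpleZeros g) (u : ℂ) :
    HasSimpleZeros fun w ↦ g (w - u) := fun z hz ↦ by
  rw [deriv_comp_sub_const]; exact hg _ hz

lemma HasSimpleZeros.finsetProd {ι : Type*} {s : Finset ι} {g : ι → ℂ → ℂ}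
    (hg : ∀ i ∈ s, HasSimpleZeros (g i)) (hgd : ∀ i ∈ s, Differentiable ℂ (g i))
    (hdisj : ∀ i ∈ s, ∀ j ∈ s, i ≠ j → ∀ z, g i z = 0 → g j z ≠ 0) :
    HasSimpleZeros fun w ↦ ∏ i ∈ s, g i w := by
  classical
  intro z hz
  obtain ⟨i, hi, hiz⟩ := Finset.prod_eq_zero_iff.1 hz
  rw [(HasDerivAt.fun_finsetProd fun j hj ↦ (hgd j hj z).hasDerivAt).deriv,
    Finset.sum_eq_single i (fun j hj hji ↦ ?_) (absurd hi)]
  · exact mul_ne_zero (Finset.prod_ne_zero_iff.2 fun j hj ↦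
      hdisj i hi j (Finset.mem_of_mem_erase hj) (Finset.ne_of_mem_erase hj).symm z hiz)
      (hg i hi z hiz)
  · rw [Finset.prod_eq_zero (Finset.mem_erase.2 ⟨(Ne.symm hji), hi⟩) hiz, zero_smul]

end SimpleZeros

/-- `Θ_n(χ)` with `a = χ(1)` and `b = χ(τ) e^{-πinτ}`. -/
structure IsThetaFunction (τ : ℂ) (n : ℕ) (a b : ℂ) (f : ℂ → ℂ) : Prop where
  differentiable : Differentiable ℂ f
  add_one (w : ℂ) : f (w + 1) = a * f w
  add_tau (w : ℂ) : f (w + τ) = b * e (-n * w) * f w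

namespace IsThetaFunction

variable {τ : ℂ} {n m : ℕ} {a b a' b' : ℂ} {f g : ℂ → ℂ}

lemma one : IsThetaFunction τ 0 1 1 fun _ ↦ 1 :=
  ⟨differentiable_const 1, fun _ ↦ (mul_one 1).symm, fun _ ↦ by simp [e_zero]⟩

lemma mul (hf : IsThetaFunction τ n a b f) (hg : IsThetaFunction τ m a' b' g) :
    IsThetaFunction τ (n + m) (a * a') (b * b') fun w ↦ f w * g w where
  differentiable := hf.differentiable.mul hg.differentiable
  add_one w := by rw [hf.add_one, hg.add_one]; ring
  add_tau w := by
    rw [hf.add_tau, hg.add_tau, Nat.cast_add, neg_add, add_mul, e_add]; ring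

lemma finsetProd {ι : Type*} {s : Finset ι} {n : ι → ℕ} {a b : ι → ℂ} {f : ι → ℂ → ℂ}
    (hf : ∀ i ∈ s, IsThetaFunction τ (n i) (a i) (b i) (f i)) :
    IsThetaFunction τ (∑ i ∈ s, n i) (∏ i ∈ s, a i) (∏ i ∈ s, b i) fun w ↦ ∏ i ∈ s, f i w := by
  classical
  induction s using Finset.induction_on with
  | empty => simpa using one
  | insert i s hi ih =>
    simp only [Finset.sum_insert hi, Finset.prod_insert hi]
    exact (hf i (Finset.mem_insert_self i s)).mul (ih fun j hj ↦ hf j (Finset.mem_insert_of_mem hj))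

lemma comp_sub (hf : IsThetaFunction τ n a b f) (u : ℂ) :
    IsThetaFunction τ n a (b * e (n * u)) fun w ↦ f (w - u) where
  differentiable := hf.differentiable.comp (differentiable_id.sub_const u)
  add_one w := by rw [← sub_add_eq_add_sub, hf.add_one]
  add_tau w := by
    rw [← sub_add_eq_add_sub, hf.add_tau, show -n * (w - u) = n * u + -n * w by ring, e_add]
    ring

lemma sub (hf : IsThetaFunction τ n a b f) (hg : IsThetaFunction τ n a b g) :
    IsThetaFunction τ n a b (f - g) where
  differentiable := hf.differentiable.sub hg.differentiable
  add_one w := by simp only [Pi.sub_apply, hf.add_one, hg.add_one]; ring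
  add_tau w := by simp only [Pi.sub_apply, hf.add_tau, hg.add_tau]; ring

lemma deriv_add_one (hf : IsThetaFunction τ n a b f) (w : ℂ) :
    deriv f (w + 1) = a * deriv f w := by
  rw [← deriv_comp_add_const, funext hf.add_one, deriv_const_mul _ (hf.differentiable w)]

lemma deriv_add_tau (hf : IsThetaFunction τ n a b f) {w : ℂ} (hw : f w = 0) :
    deriv f (w + τ) = b * e (-n * w) * deriv f w := by
  have hc : DifferentiableAt ℂ (fun w ↦ b * e (-n * w)) w := by fun_prop
  rw [← deriv_comp_add_const, funext hf.add_tau, deriv_fun_mul hc (hf.differentiable w), hw,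
    mul_zero, zero_add]

lemma periodic_eq_zero (hf : IsThetaFunction τ n a b f) (ha : a ≠ 0) (hb : b ≠ 0) {l : ℂ}
    (hl : l ∈ lattice τ) :
    Periodic (fun w ↦ f w = 0) l := by
  refine periodic_of_lattice (fun w ↦ ?_) (fun w ↦ ?_) hl <;> apply propext
  · rw [hf.add_one, mul_eq_zero, or_iff_right ha]
  · rw [hf.add_tau, mul_eq_zero, or_iff_right (mul_ne_zero hb (e_ne_zero _))]

lemma periodic_simpleZero (hf : IsThetaFunction τ n a b f) (ha : a ≠ 0) (hb : b ≠ 0) {l : ℂ}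
    (hl : l ∈ lattice τ) :
    Periodic (fun w ↦ f w = 0 → deriv f w ≠ 0) l := by
  refine periodic_of_lattice (fun w ↦ ?_) (fun w ↦ ?_) hl <;> apply propext
  · simp [hf.add_one, hf.deriv_add_one, ha]
  · have hc := mul_ne_zero hb (e_ne_zero (-n * w))
    rw [hf.add_tau, mul_eq_zero, or_iff_right hc]
    exact imp_congr_right fun hw ↦ by rw [hf.deriv_add_tau hw, mul_ne_zero_iff, and_iff_right hc]

lemma exists_eq_mul {c d : ℂ} (hf : IsThetaFunction τ n (a * c) (b * d) f)
    (hg : IsThetaFunction τ n a b g) (ha : a ≠ 0) (hb : b ≠ 0) (hgs : HasSimpleZeros g)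
    (hfg : ∀ z, g z = 0 → f z = 0) :
    ∃ h, IsThetaFunction τ 0 c d h ∧ ∀ w, f w = g w * h w := by
  obtain ⟨h, hd, hfgh⟩ := hgs.exists_eq_mul hg.differentiable hf.differentiable hfg
  have hcont := hd.continuous
  have hcancel {k : ℂ → ℂ} (hk : Continuous k) (hgk : ∀ w, g w * k w = 0) (w : ℂ) : k w = 0 :=
    congrFun (hgs.eq_zero_of_mul_eq_zero hg.differentiable hk hgk) w
  refine ⟨h, ⟨hd, fun w ↦ ?_, fun w ↦ ?_⟩, hfgh⟩
  · refine sub_eq_zero.1 (hcancel (k := fun w ↦ h (w + 1) - c * h w) (by fun_prop) (fun w ↦ ?_) w)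
    have e₁ := hfgh (w + 1)
    rw [hf.add_one, hg.add_one, hfgh w] at e₁
    exact mul_left_cancel₀ ha (by linear_combination -e₁)
  · rw [Nat.cast_zero, neg_zero, zero_mul, e_zero, mul_one]
    refine sub_eq_zero.1 (hcancel (k := fun w ↦ h (w + τ) - d * h w) (by fun_prop) (fun w ↦ ?_) w)
    have e₁ := hfgh (w + τ)
    rw [hf.add_tau, hg.add_tau, hfgh w] at e₁
    exact mul_left_cancel₀ (mul_ne_zero hb (e_ne_zero (-n * w))) (by linear_combination -e₁)

end IsThetaFunction

section Theta

variable {τ : ℂ}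

/-- Up to a factor independent of `w`, the Jacobi theta function `ϑ₁(πw | τ)`
(by the triple product formula). -/
def theta (τ w : ℂ) : ℂ :=
  e (-w / 2) * qPochhammer (e τ) (e w) * qPochhammer (e τ) (e τ * e (-w))

lemma isThetaFunction_theta (hτ : 0 < τ.im) :
    IsThetaFunction τ 1 (-1) (-e (-τ / 2)) (theta τ) where
  differentiable := by
    have hP := differentiable_qPochhammer (norm_e_lt_one hτ)
    unfold theta
    fun_prop
  add_one w := by
    rw [theta, theta, show -(w + 1) / 2 = -w / 2 + -1 / 2 by ring, neg_add, e_add, e_add, e_add,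
      e_neg_half, show e 1 = 1 by exact_mod_cast e_intCast 1,
      show e (-1) = 1 by exact_mod_cast e_intCast (-1)]
    simp only [mul_one]
    ring
  add_tau w := by
    have hq := norm_e_lt_one hτ
    have hinv : e w * e (-w) = 1 := by rw [← e_add, add_neg_cancel, e_zero]
    have hshift : e τ * e (-(w + τ)) = e (-w) := by
      rw [neg_add, e_add, e_neg τ]; field_simp [e_ne_zero τ]
    rw [theta, theta, hshift, e_add w τ, mul_comm (e w), qPochhammer_eq_mul hq (e w),
      qPochhammer_eq_mul hq (e (-w)), show -(w + τ) / 2 = -w / 2 + -τ / 2 by ring, e_add,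
      Nat.cast_one, neg_one_mul]
    linear_combination (-(e (-w / 2) * e (-τ / 2) * qPochhammer (e τ) (e τ * e w) *
      qPochhammer (e τ) (e τ * e (-w)))) * hinv

lemma theta_eq_zero_iff (hτ : 0 < τ.im) (w : ℂ) : theta τ w = 0 ↔ w ∈ lattice τ := by
  have hq := norm_e_lt_one hτ
  have hθ := isThetaFunction_theta hτ
  refine ⟨fun h ↦ ?_, fun hw ↦ ?_⟩
  · simp only [theta, mul_eq_zero, e_ne_zero, false_or, qPochhammer_eq_zero_iff hq] at h
    rcases h with ⟨k, hk⟩ | ⟨k, hk⟩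
    · rw [← e_natCast_mul, ← e_add, e_eq_one_iff] at hk
      obtain ⟨m, hm⟩ := hk
      exact mem_lattice.2 ⟨m, -k, by push_cast; linear_combination hm⟩
    · rw [← e_natCast_mul, ← e_add, ← e_add, e_eq_one_iff] at hk
      obtain ⟨m, hm⟩ := hk
      exact mem_lattice.2 ⟨-m, k + 1, by push_cast; linear_combination -hm⟩
  · have h0 : theta τ 0 = 0 := by
      simp only [theta, mul_eq_zero, qPochhammer_eq_zero_iff hq, e_zero]
      exact Or.inl (Or.inr ⟨0, by simp⟩)
    simpa [h0] using hθ.periodic_eq_zero (by norm_num) (neg_ne_zero.2 (e_ne_zero _)) hw 0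

lemma qPochhammer_self_ne_zero (hτ : 0 < τ.im) : qPochhammer (e τ) (e τ) ≠ 0 := by
  rw [Ne, qPochhammer_eq_zero_iff (norm_e_lt_one hτ)]
  rintro ⟨k, hk⟩
  have h := pow_lt_one₀ (norm_nonneg _) (norm_e_lt_one hτ) k.succ_ne_zero
  rw [← norm_pow, pow_succ', hk, norm_one] at h
  exact lt_irrefl 1 h

lemma hasDerivAt_theta_zero (hτ : 0 < τ.im) :
    HasDerivAt (theta τ) (-(2 * π * I) * qPochhammer (e τ) (e τ) ^ 2) 0 := by
  have hq := norm_e_lt_one hτ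
  set G : ℂ → ℂ := fun w ↦ e (-w / 2) * qPochhammer (e τ) (e τ * e w) *
    qPochhammer (e τ) (e τ * e (-w))
  have hG : Differentiable ℂ G := by
    have hP := differentiable_qPochhammer hq
    fun_prop
  have hθ : theta τ = fun w ↦ (1 - e w) * G w := by
    ext w; rw [theta, qPochhammer_eq_mul hq]; ring
  have h := ((hasDerivAt_e 0).const_sub 1).fun_mul (hG 0).hasDerivAt
  rw [hθ]
  refine h.congr_deriv ?_
  simp [G, e_zero]
  ring

lemma hasSimpleZeros_theta (hτ : 0 < τ.im) : HasSimpleZeros (theta τ) := fun z hz ↦ by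
  have hP := (isThetaFunction_theta hτ).periodic_simpleZero (by norm_num)
    (neg_ne_zero.2 (e_ne_zero _)) ((theta_eq_zero_iff hτ z).1 hz) 0
  simp only [zero_add] at hP
  refine (Eq.mpr hP fun _ ↦ ?_) hz
  rw [(hasDerivAt_theta_zero hτ).deriv]
  exact mul_ne_zero (neg_ne_zero.2 two_pi_I_ne_zero) (pow_ne_zero 2 (qPochhammer_self_ne_zero hτ))

end Theta

section Liouville

lemma eq_add_mul_of_eq_mul_inv {g h : ℂ → ℂ} (hg : Differentiable ℂ g) (hh : ContinuousAt h 0)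
    (hgh : ∀ q ≠ 0, g q = q * h q⁻¹) (q : ℂ) : g q = g 0 + h 0 * q := by
  have hslope : ∀ q ≠ 0, dslope g 0 q = h q⁻¹ - g 0 * q⁻¹ := fun q hq ↦ by
    rw [dslope_of_ne _ hq, slope_def_field, sub_zero, hgh q hq]
    field_simp
  have hlim : Tendsto (dslope g 0) (cocompact ℂ) (𝓝 (h 0)) := by
    rw [← Metric.cobounded_eq_cocompact]
    have := (hh.tendsto.comp tendsto_inv₀_cobounded).sub (tendsto_inv₀_cobounded.const_mul (g 0))
    rw [mul_zero, sub_zero] at this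
    refine this.congr' ?_
    filter_upwards [Bornology.eventually_ne_cobounded 0] with q hq using (hslope q hq).symm
  rcases eq_or_ne q 0 with rfl | hq
  · simp
  · have := (differentiable_dslope hg 0).apply_eq_of_tendsto_cocompact q hlim
    rw [dslope_of_ne _ hq, slope_def_field, sub_zero, div_eq_iff hq] at this
    linear_combination this

variable {τ μ : ℂ} {f : ℂ → ℂ}

lemma add_natCast_mul_eq_pow_mul (hτf : ∀ w, f (w + τ) = μ * f w) (k : ℕ) (z : ℂ) :
    f (z + k * τ) = μ ^ k * f z := by
  induction k with
  | zero => simp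
  | succ k ih => rw [Nat.cast_succ, add_one_mul, ← add_assoc, hτf, ih, pow_succ']; ring

lemma eq_ofReal_add_ofReal_mul (hτ : 0 < τ.im) (w : ℂ) :
    w = ((w.re - w.im / τ.im * τ.re : ℝ) : ℂ) + ((w.im / τ.im : ℝ) : ℂ) * τ := by
  apply Complex.ext <;> simp [field]

lemma exists_bound_of_norm_le_one (hτ : 0 < τ.im) (hf : Continuous f) (h1 : Periodic f 1)
    (hτf : ∀ w, f (w + τ) = μ * f w) (hμ : ‖μ‖ ≤ 1) : ∃ M, ∀ w, 0 ≤ w.im → ‖f w‖ ≤ M := by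
  set K := (fun p : ℝ × ℝ ↦ (p.1 : ℂ) + p.2 * τ) '' (Set.Icc 0 1 ×ˢ Set.Icc 0 1)
  have hK : IsCompact K := (isCompact_Icc.prod isCompact_Icc).image (by fun_prop)
  obtain ⟨M, hM⟩ := hK.exists_bound_of_continuousOn hf.continuousOn
  refine ⟨M, fun w hw ↦ ?_⟩
  set s := w.re - w.im / τ.im * τ.re
  set t := w.im / τ.im
  set w₀ : ℂ := Int.fract s + Int.fract t * τ
  have hw₀ : w₀ ∈ K := ⟨(Int.fract s, Int.fract t),
    ⟨⟨Int.fract_nonneg s, (Int.fract_lt_one s).le⟩, ⟨Int.fract_nonneg t, (Int.fract_lt_one t).le⟩⟩,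
    rfl⟩
  obtain ⟨k, hk⟩ : ∃ k : ℕ, ⌊t⌋ = k :=
    Int.eq_ofNat_of_zero_le (Int.floor_nonneg.2 (div_nonneg hw hτ.le))
  have hs : ((⌊s⌋ : ℤ) : ℂ) + Int.fract s = s := by exact_mod_cast Int.floor_add_fract s
  have ht : ((⌊t⌋ : ℤ) : ℂ) + Int.fract t = t := by exact_mod_cast Int.floor_add_fract t
  rw [hk, Int.cast_natCast] at ht
  have hw' : w = w₀ + k * τ + ⌊s⌋ := by
    rw [show w = s + t * τ from eq_ofReal_add_ofReal_mul hτ w]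
    linear_combination -hs - τ * ht
  have hper := h1.int_mul ⌊s⌋ (w₀ + k * τ)
  rw [mul_one] at hper
  rw [hw', hper, add_natCast_mul_eq_pow_mul hτf, norm_mul, norm_pow]
  exact (mul_le_of_le_one_left (norm_nonneg _) (pow_le_one₀ (norm_nonneg _) hμ)).trans
    (hM w₀ hw₀)

lemma differentiable_cuspFunction (hτ : 0 < τ.im) (hf : Differentiable ℂ f) (h1 : Periodic f 1)
    (hτf : ∀ w, f (w + τ) = μ * f w) (hμ : ‖μ‖ ≤ 1) :
    Differentiable ℂ (Periodic.cuspFunction 1 f) := by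
  have h1' : Periodic f ((1 : ℝ) : ℂ) := by simpa using h1
  intro q
  rcases eq_or_ne q 0 with rfl | hq
  · obtain ⟨M, hM⟩ := exists_bound_of_norm_le_one hτ hf.continuous h1 hτf hμ
    refine Periodic.differentiableAt_cuspFunction_zero one_pos h1' (.of_forall fun z ↦ hf z)
      (Asymptotics.IsBigO.of_bound M ?_)
    filter_upwards [preimage_mem_comap (Ici_mem_atTop 0)] with w hw
    simpa using hM w hw
  · rw [← Periodic.qParam_right_inv one_ne_zero hq]
    exact Periodic.differentiableAt_cuspFunction one_ne_zero h1' (hf _)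

lemma cuspFunction_e (h1 : Periodic f 1) (w : ℂ) : Periodic.cuspFunction 1 f (e w) = f w := by
  rw [e_eq_qParam]
  exact Periodic.eq_cuspFunction one_ne_zero (by simpa using h1) w

lemma eq_zero_of_norm_le_one_of_le_norm (hτ : 0 < τ.im) (hf : Differentiable ℂ f)
    (h1 : Periodic f 1) (hτf : ∀ w, f (w + τ) = μ * f w) (hle : ‖μ‖ ≤ 1) (hge : ‖e τ‖ ≤ ‖μ‖)
    (hμ1 : μ ≠ 1) (hμτ : μ ≠ e τ) : f = 0 := by
  have hμ0 : μ ≠ 0 := norm_pos_iff.1 ((norm_pos_iff.2 (e_ne_zero τ)).trans_le hge)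
  set f' : ℂ → ℂ := fun w ↦ e w * f (-w)
  have h1' : Periodic f' 1 := fun w ↦ by
    simp only [f', neg_add, ← sub_eq_add_neg, h1.sub_eq]
    rw [show w + 1 = w + ((1 : ℤ) : ℂ) by simp, e_add_intCast]
  have hτ' : ∀ w, f' (w + τ) = e τ / μ * f' w := fun w ↦ by
    have h := hτf (-(w + τ))
    rw [show -(w + τ) + τ = -w by ring] at h
    simp only [f', e_add, h]
    field_simp
  have hle' : ‖e τ / μ‖ ≤ 1 := by rw [norm_div]; exact div_le_one_of_le₀ hge (norm_nonneg _)
  set g := Periodic.cuspFunction 1 f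
  set c := Periodic.cuspFunction 1 f' 0
  have hg : ∀ w, g (e w) = f w := cuspFunction_e h1
  -- `q⁻¹ g(q)` is the cusp function of `f'` at `q⁻¹`: `g` has at most a simple pole at `∞`
  have haff : ∀ q, g q = g 0 + c * q := by
    refine eq_add_mul_of_eq_mul_inv (differentiable_cuspFunction hτ hf h1 hτf hle)
      (differentiable_cuspFunction hτ (by fun_prop) h1' hτ' hle' 0).continuousAt fun q hq ↦ ?_
    obtain ⟨w, rfl⟩ : ∃ w, e w = q :=
      ⟨_, by rw [e_eq_qParam]; exact Periodic.qParam_right_inv one_ne_zero hq⟩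
    rw [← e_neg, cuspFunction_e h1', hg]
    simp only [f', neg_neg, e_neg]
    field_simp [e_ne_zero w]
  have hfun : ∀ w, g (e τ * e w) = μ * g (e w) := fun w ↦ by
    rw [← e_add, add_comm, hg, hg, hτf]
  have e₁ := hfun 0
  have e₂ := hfun (-1 / 2)
  rw [e_zero, haff (e τ * 1), haff 1] at e₁
  rw [e_neg_half, haff (e τ * -1), haff (-1)] at e₂
  have hg0 : g 0 = 0 := by
    have : g 0 * (1 - μ) = 0 := by linear_combination (e₁ + e₂) / 2
    exact (mul_eq_zero.1 this).resolve_right (sub_ne_zero.2 hμ1.symm)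
  have hc : c = 0 := by
    have : c * (e τ - μ) = 0 := by linear_combination (e₁ - e₂) / 2
    exact (mul_eq_zero.1 this).resolve_right (sub_ne_zero.2 hμτ.symm)
  funext w
  rw [← hg w, haff, hg0, hc, zero_mul, add_zero, Pi.zero_apply]

lemma eq_zero_of_add_tau (hτ : 0 < τ.im) (hf : Differentiable ℂ f) (h1 : Periodic f 1)
    (hτf : ∀ w, f (w + τ) = μ * f w) (hμ : ∀ k : ℤ, μ ≠ e (k * τ)) : f = 0 := by
  rcases eq_or_ne μ 0 with rfl | hμ0
  · funext w
    simpa using hτf (w - τ)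
  set r := ‖e τ‖
  have hr0 : 0 < r := norm_pos_iff.2 (e_ne_zero τ)
  obtain ⟨m, hm_lt, hm_le⟩ :=
    exists_mem_Ioc_zpow (norm_pos_iff.2 hμ0) ((one_lt_inv₀ hr0).2 (norm_e_lt_one hτ))
  rw [inv_zpow] at hm_lt hm_le
  -- multiplying by `e ((m + 1) w)` moves `‖μ‖` into `[‖e τ‖, 1]`
  set c : ℂ := e ((m + 1 : ℤ) * τ)
  have hc : ‖c‖ = r ^ (m + 1) := by rw [show c = e τ ^ (m + 1) from e_intCast_mul _ _, norm_zpow]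
  have hpos : 0 < r ^ (m + 1) := zpow_pos hr0 _
  have key := eq_zero_of_norm_le_one_of_le_norm hτ (f := fun w ↦ e ((m + 1 : ℤ) * w) * f w)
    (μ := μ * c) (by fun_prop) (fun w ↦ ?_) (fun w ↦ ?_) ?_ ?_ ?_ ?_
  · funext w
    simpa [e_ne_zero] using congrFun key w
  · simp only [mul_add, mul_one, e_add_intCast, h1 w]
  · simp only [mul_add, e_add, hτf, c]
    ring
  · rw [norm_mul, hc]
    calc ‖μ‖ * r ^ (m + 1) ≤ (r ^ (m + 1))⁻¹ * r ^ (m + 1) := by gcongr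
      _ = 1 := inv_mul_cancel₀ hpos.ne'
  · rw [norm_mul, hc]
    calc r = (r ^ m)⁻¹ * r ^ (m + 1) := by
          rw [zpow_add_one₀ hr0.ne', inv_mul_cancel_left₀ (zpow_pos hr0 m).ne']
      _ ≤ ‖μ‖ * r ^ (m + 1) := by gcongr
  · intro h
    apply hμ (-(m + 1))
    rw [Int.cast_neg, neg_mul, e_neg, ← eq_inv_of_mul_eq_one_left h]
  · intro h
    apply hμ (-m)
    rw [show ((-m : ℤ) : ℂ) * τ = τ - ((m + 1 : ℤ) : ℂ) * τ by push_cast; ring, e_sub, ← h,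
      mul_div_cancel_right₀ _ (e_ne_zero _)]

end Liouville

section ThetaProduct

variable {τ : ℂ}

lemma isThetaFunction_prod_theta (hτ : 0 < τ.im) {n : ℕ} (u : Fin n → ℂ) :
    IsThetaFunction τ n ((-1) ^ n) ((-1) ^ n * e (-n * τ / 2) * e (∑ i, u i))
      fun w ↦ ∏ i, theta τ (w - u i) := by
  convert IsThetaFunction.finsetProd (s := Finset.univ)
    fun i _ ↦ (isThetaFunction_theta hτ).comp_sub (u i) using 1
  · simp
  · simp
  · simp only [Nat.cast_one, one_mul, Finset.prod_mul_distrib, Finset.prod_const,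
      Finset.card_univ, Fintype.card_fin, e_sum]
    rw [neg_pow (e _), ← e_natCast_mul, show -(n : ℂ) * τ / 2 = n * (-τ / 2) by ring]

lemma hasSimpleZeros_prod_theta (hτ : 0 < τ.im) {n : ℕ} {u : Fin n → ℂ}
    (hdist : ∀ i j, i ≠ j → u i - u j ∉ lattice τ) :
    HasSimpleZeros fun w ↦ ∏ i, theta τ (w - u i) := by
  refine HasSimpleZeros.finsetProd (fun i _ ↦ (hasSimpleZeros_theta hτ).comp_sub_const (u i))
    (fun i _ ↦ (isThetaFunction_theta hτ).differentiable.comp (differentiable_id.sub_const _))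
    fun i _ j _ hij z hi hj ↦ hdist i j hij ?_
  rw [theta_eq_zero_iff hτ] at hi hj
  simpa using sub_mem hj hi

lemma IsThetaFunction.eq_zero_of_apply_eq_zero (hτ : 0 < τ.im) {n : ℕ} {α : ℂ} {f : ℂ → ℂ}
    (hf : IsThetaFunction τ n ((-1) ^ n) ((-1) ^ n * e α * e (-n * τ / 2)) f) (u : Fin n → ℂ)
    (hdist : ∀ i j, i ≠ j → u i - u j ∉ lattice τ) (hsum : (∑ i, u i) - α ∉ lattice τ)
    (hu : ∀ i, f (u i) = 0) : f = 0 := by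
  have hD := isThetaFunction_prod_theta hτ u
  have hf' : IsThetaFunction τ n ((-1) ^ n * 1)
      ((-1) ^ n * e (-n * τ / 2) * e (∑ i, u i) * e (α - ∑ i, u i)) f := by
    convert hf using 1
    · ring
    · rw [e_sub]; field_simp [e_ne_zero]
  have hDf : ∀ z, ∏ i, theta τ (z - u i) = 0 → f z = 0 := fun z hz ↦ by
    obtain ⟨i, -, hi⟩ := Finset.prod_eq_zero_iff.1 hz
    have := hf.periodic_eq_zero (by simp) (by simp [e_ne_zero]) ((theta_eq_zero_iff hτ _).1 hi)
      (u i)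
    simpa [hu i] using this
  obtain ⟨h, hh, hfh⟩ := hf'.exists_eq_mul hD (by simp) (by simp [e_ne_zero])
    (hasSimpleZeros_prod_theta hτ hdist) hDf
  have h0 : h = 0 := by
    refine eq_zero_of_add_tau hτ hh.differentiable (fun w ↦ by simpa using hh.add_one w)
      (fun w ↦ by simpa [e_zero] using hh.add_tau w) fun k hk ↦ hsum ?_
    have : (α - ∑ i, u i) - k * τ ∈ lattice τ := mem_lattice_of_e_eq_one (by
      rw [e_sub, hk, div_self (e_ne_zero _)])
    have hkτ : (k : ℂ) * τ ∈ lattice τ := by simpa using (lattice τ).smul_mem k (self_mem_lattice τ)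
    simpa using neg_mem (add_mem this hkτ)
  funext w
  simp [hfh w, h0]

end ThetaProduct

end ThetaPoly

end

open ThetaPoly in
theorem theta_poly_coincide_general (τ : ℂ) (hτ : 0 < τ.im) (n : ℕ) (α : ℂ)
    (P₁ P₂ : ℂ → ℂ)
    (hP₁ : Differentiable ℂ P₁ ∧ (∀ w, P₁ (w + 1) = (-1 : ℂ) ^ n * P₁ w) ∧
      (∀ w, P₁ (w + τ) = (-1 : ℂ) ^ n * Complex.exp (2 * (Real.pi : ℂ) * Complex.I * α) *
        Complex.exp (-(2 * (Real.pi : ℂ) * Complex.I * (n : ℂ) * w) -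
          (Real.pi : ℂ) * Complex.I * (n : ℂ) * τ) * P₁ w))
    (hP₂ : Differentiable ℂ P₂ ∧ (∀ w, P₂ (w + 1) = (-1 : ℂ) ^ n * P₂ w) ∧
      (∀ w, P₂ (w + τ) = (-1 : ℂ) ^ n * Complex.exp (2 * (Real.pi : ℂ) * Complex.I * α) *
        Complex.exp (-(2 * (Real.pi : ℂ) * Complex.I * (n : ℂ) * w) -
          (Real.pi : ℂ) * Complex.I * (n : ℂ) * τ) * P₂ w))
    (u : Fin n → ℂ)
    (hdist : ∀ i j : Fin n, i ≠ j → ¬∃ a b : ℤ, u i - u j = (a : ℂ) + (b : ℂ) * τ)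
    (hsum : ¬∃ a b : ℤ, (∑ k, u k) - α = (a : ℂ) + (b : ℂ) * τ)
    (heq : ∀ i : Fin n, P₁ (u i) = P₂ (u i)) :
    P₁ = P₂ := by
  have hexp (w : ℂ) : exp (2 * π * I * α) * exp (-(2 * π * I * n * w) - π * I * n * τ) =
      e α * e (-n * τ / 2) * e (-n * w) := by
    simp only [e, ← exp_add]; ring_nf
  have hΘ {P : ℂ → ℂ} (hP : Differentiable ℂ P ∧ (∀ w, P (w + 1) = (-1 : ℂ) ^ n * P w) ∧
      ∀ w, P (w + τ) = (-1 : ℂ) ^ n * exp (2 * π * I * α) *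
        exp (-(2 * π * I * n * w) - π * I * n * τ) * P w) :
      IsThetaFunction τ n ((-1) ^ n) ((-1) ^ n * e α * e (-n * τ / 2)) P :=
    ⟨hP.1, hP.2.1, fun w ↦ by rw [hP.2.2, mul_assoc ((-1) ^ n), hexp]; ring⟩
  have h := ((hΘ hP₁).sub (hΘ hP₂)).eq_zero_of_apply_eq_zero hτ u
    (fun i j hij ↦ by simpa [mem_lattice] using hdist i j hij) (by simpa [mem_lattice] using hsum)
    fun i ↦ sub_eq_zero.2 (heq i)
  exact sub_eq_zero.1 h

/-- Two elliptic polynomials `P₁, P₂ ∈ Θ_n(χ)` with `χ(1) = (-1)^n`,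
`χ(τ) = (-1)^n e^{2πiα}`, which agree at `n` points `u_1,...,u_n` with
`u_i - u_j ∉ Γ` (`i ≠ j`) and `Σ_k u_k - α ∉ Γ`, coincide identically. -/
theorem theta_poly_coincide (τ : ℂ) (hτ : 0 < τ.im) (n : ℕ) (hn : 0 < n) (α : ℂ)
    (P₁ P₂ : ℂ → ℂ)
    (hP₁ : Differentiable ℂ P₁ ∧ (∀ w, P₁ (w + 1) = (-1 : ℂ) ^ n * P₁ w) ∧
      (∀ w, P₁ (w + τ) = (-1 : ℂ) ^ n * Complex.exp (2 * (Real.pi : ℂ) * Complex.I * α) *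
        Complex.exp (-(2 * (Real.pi : ℂ) * Complex.I * (n : ℂ) * w) -
          (Real.pi : ℂ) * Complex.I * (n : ℂ) * τ) * P₁ w))
    (hP₂ : Differentiable ℂ P₂ ∧ (∀ w, P₂ (w + 1) = (-1 : ℂ) ^ n * P₂ w) ∧
      (∀ w, P₂ (w + τ) = (-1 : ℂ) ^ n * Complex.exp (2 * (Real.pi : ℂ) * Complex.I * α) *
        Complex.exp (-(2 * (Real.pi : ℂ) * Complex.I * (n : ℂ) * w) -
          (Real.pi : ℂ) * Complex.I * (n : ℂ) * τ) * P₂ w))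
    (u : Fin n → ℂ)
    (hdist : ∀ i j : Fin n, i ≠ j → ¬∃ a b : ℤ, u i - u j = (a : ℂ) + (b : ℂ) * τ)
    (hsum : ¬∃ a b : ℤ, (∑ k, u k) - α = (a : ℂ) + (b : ℂ) * τ)
    (heq : ∀ i : Fin n, P₁ (u i) = P₂ (u i)) :
    P₁ = P₂ :=
  theta_poly_coincide_general τ hτ n α P₁ P₂ hP₁ hP₂ u hdist hsum heq
end

section
/- Let ℋ be a Hopf algebra with subalgebras 𝒜⁻ and 𝒜⁺ such that the multiplication map μ: 𝒜⁻ ⊗ 𝒜⁺ → ℋ is a linear isomorphism, Δ(𝒜⁻) ⊆ ℋ ⊗ 𝒜⁻ (left coideal), and Δ(𝒜⁺) ⊆ 𝒜⁺ ⊗ ℋ (right coideal). Define P⁻(ab) = a·ε(b) and P⁺(ab) = ε(a)·b for a ∈ 𝒜⁻, b ∈ 𝒜⁺. Then μ ∘ (P⁻ ⊗ P⁺) ∘ Δ = id_ℋ. -/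
/-!
Both sides are linear and `H` is spanned by the products `a * b` with `a ∈ Am`, `b ∈ Ap`.
Checking on such products shows `Pm (h * b) = ε b • Pm h` for `b ∈ Ap` and
`Pp (a * h) = ε a • Pp h` for `a ∈ Am`. The coideal conditions let us write
`Δ (a * b) = Δ a * Δ b = ∑ a₁ b₁ ⊗ a₂ b₂` with `a₂ ∈ Am` and `b₁ ∈ Ap`, so
`μ (Pm ⊗ Pp) Δ (a * b) = ∑ Pm (a₁ ε(a₂)) * Pp (ε(b₁) b₂) = Pm a * Pp b = a * b`
by the counit axiom.
-/

open TensorProduct Coalgebra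
open scoped Pointwise

section

variable {R A : Type*} [CommSemiring R] [Semiring A] [Bialgebra R A]

lemma map_mul_right_of_mem_mul {M : Submodule R A} {N : Subalgebra R A} {P : A →ₗ[R] A}
    (hP : ∀ a ∈ M, ∀ b ∈ N, P (a * b) = counit (R := R) b • a)
    {h : A} (hh : h ∈ M * Subalgebra.toSubmodule N) {b : A} (hb : b ∈ N) :
    P (h * b) = counit (R := R) b • P h := by
  induction hh using Submodule.mul_induction_on' with
  | mem_mul_mem a ha b' hb' =>
    rw [mul_assoc, hP a ha _ (N.mul_mem hb' hb), hP a ha b' hb', Bialgebra.counit_mul,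
      mul_comm, mul_smul]
  | add x _ y _ hx hy => rw [add_mul, map_add, map_add, hx, hy, smul_add]

lemma map_mul_left_of_mem_mul {M : Subalgebra R A} {N : Submodule R A} {P : A →ₗ[R] A}
    (hP : ∀ a ∈ M, ∀ b ∈ N, P (a * b) = counit (R := R) a • b)
    {h : A} (hh : h ∈ Subalgebra.toSubmodule M * N) {a : A} (ha : a ∈ M) :
    P (a * h) = counit (R := R) a • P h := by
  induction hh using Submodule.mul_induction_on' with
  | mem_mul_mem a' ha' b hb =>
    rw [← mul_assoc, hP _ (M.mul_mem ha ha') b hb, hP a' ha' b hb, Bialgebra.counit_mul,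
      mul_smul]
  | add x _ y _ hx hy => rw [mul_add, map_add, map_add, hx, hy, smul_add]

lemma mul'_map_mul_of_mem_range {M N : Submodule R A} {Pm Pp : A →ₗ[R] A}
    (hPm : ∀ h, ∀ b ∈ N, Pm (h * b) = counit (R := R) b • Pm h)
    (hPp : ∀ a ∈ M, ∀ h, Pp (a * h) = counit (R := R) a • Pp h)
    {x y : A ⊗[R] A} (hx : x ∈ LinearMap.range (M.subtype.lTensor A))
    (hy : y ∈ LinearMap.range (N.subtype.rTensor A)) :
    LinearMap.mul' R A (map Pm Pp (x * y)) =
      Pm (TensorProduct.rid R A (counit.lTensor A x)) *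
        Pp (TensorProduct.lid R A (counit.rTensor A y)) := by
  obtain ⟨u, rfl⟩ := hx
  obtain ⟨v, rfl⟩ := hy
  induction u with
  | zero => simp
  | add u₁ u₂ h₁ h₂ => simp only [map_add, add_mul, h₁, h₂]
  | tmul h a =>
    induction v with
    | zero => simp
    | add v₁ v₂ h₁ h₂ => simp only [map_add, mul_add, h₁, h₂]
    | tmul b g =>
      simp only [LinearMap.lTensor_tmul, LinearMap.rTensor_tmul, Submodule.subtype_apply,
        Algebra.TensorProduct.tmul_mul_tmul, map_tmul, LinearMap.mul'_apply, rid_tmul, lid_tmul,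
        map_smul, hPm h b b.2, hPp a a.2 g, smul_mul_smul_comm, mul_comm (counit (R := R) (b : A))]

lemma mul'_map_comul_mul {M N : Submodule R A} {Pm Pp : A →ₗ[R] A}
    (hPm : ∀ h, ∀ b ∈ N, Pm (h * b) = counit (R := R) b • Pm h)
    (hPp : ∀ a ∈ M, ∀ h, Pp (a * h) = counit (R := R) a • Pp h)
    {a b : A} (ha : comul a ∈ LinearMap.range (M.subtype.lTensor A))
    (hb : comul b ∈ LinearMap.range (N.subtype.rTensor A)) :
    LinearMap.mul' R A (map Pm Pp (comul (a * b))) = Pm a * Pp b := by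
  rw [Bialgebra.comul_mul, mul'_map_mul_of_mem_range hPm hPp ha hb, lTensor_counit_comul,
    rTensor_counit_comul, rid_tmul, lid_tmul, one_smul, one_smul]

end

/-- For a Hopf algebra `H = 𝒜⁻ · 𝒜⁺` factorized through two subalgebras (the
multiplication map `𝒜⁻ ⊗ 𝒜⁺ → H` a linear isomorphism), with `𝒜⁻` a left coideal
and `𝒜⁺` a right coideal, the projections `P⁻(ab) = a ε(b)`, `P⁺(ab) = ε(a) b`
satisfy `μ ∘ (P⁻ ⊗ P⁺) ∘ Δ = id`. -/
theorem hopf_projection_identity (k H : Type*) [Field k] [Ring H] [HopfAlgebra k H]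
    (Am Ap : Subalgebra k H)
    (hfact : Function.Bijective
      ((LinearMap.mul' k H).comp
        (TensorProduct.map (Subalgebra.toSubmodule Am).subtype
          (Subalgebra.toSubmodule Ap).subtype)))
    (hAm : ∀ a ∈ Am, Coalgebra.comul (R := k) a ∈
      LinearMap.range (TensorProduct.map (LinearMap.id : H →ₗ[k] H)
        (Subalgebra.toSubmodule Am).subtype))
    (hAp : ∀ a ∈ Ap, Coalgebra.comul (R := k) a ∈
      LinearMap.range (TensorProduct.map (Subalgebra.toSubmodule Ap).subtype
        (LinearMap.id : H →ₗ[k] H)))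
    (Pm Pp : H →ₗ[k] H)
    (hPm : ∀ a ∈ Am, ∀ b ∈ Ap, Pm (a * b) = Coalgebra.counit (R := k) b • a)
    (hPp : ∀ a ∈ Am, ∀ b ∈ Ap, Pp (a * b) = Coalgebra.counit (R := k) a • b) :
    (LinearMap.mul' k H).comp
      ((TensorProduct.map Pm Pp).comp (Coalgebra.comul (R := k) (A := H))) =
      LinearMap.id := by
  have hspan : Subalgebra.toSubmodule Am * Subalgebra.toSubmodule Ap = ⊤ := by
    rw [← Submodule.mulMap_range, Submodule.mulMap_eq_mul'_comp_mapIncl]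
    exact LinearMap.range_eq_top.2 hfact.2
  have hPm_mul (h : H) (b : H) (hb : b ∈ Ap) : Pm (h * b) = counit (R := k) b • Pm h :=
    map_mul_right_of_mem_mul hPm (hspan ▸ Submodule.mem_top) hb
  have hPp_mul (a : H) (ha : a ∈ Am) (h : H) : Pp (a * h) = counit (R := k) a • Pp h :=
    map_mul_left_of_mem_mul hPp (hspan ▸ Submodule.mem_top) ha
  refine LinearMap.ext_on (s := (Am : Set H) * (Ap : Set H)) ?_ ?_
  · simpa [Submodule.mul_eq_span_mul_set] using hspan
  · rintro _ ⟨a, ha, b, hb, rfl⟩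
    have hPma : Pm a = a := by simpa using hPm a ha 1 Ap.one_mem
    have hPpb : Pp b = b := by simpa using hPp 1 Am.one_mem b hb
    calc _ = Pm a * Pp b := mul'_map_comul_mul hPm_mul hPp_mul (hAm a ha) (hAp b hb)
      _ = a * b := by rw [hPma, hPpb]
end

section
/- Define F^(n)(u;v;λ) = ∏_{n≥k>m≥1} (θ(v_k - v_m - ℏ)/θ(v_k - v_m)) · Σ_{σ∈S_n} ∏_{l<l', σ(l)>σ(l')} (θ(v_{σ(l)} - v_{σ(l')} + ℏ)/θ(v_{σ(l)} - v_{σ(l')} - ℏ)) · ∏_{1≤k<m≤n} θ(u_k - v_{σ(m)}) · ∏_{n≥k>m≥1} θ(u_k - v_{σ(m)} + ℏ) · ∏_{m=1}^n (θ(u_m - v_{σ(m)} - λ - (m-1)ℏ)θ(ℏ)/θ(-λ-(m-1)ℏ)). Then F^(n) satisfies the recurrence F^(n)(u_1,...,u_{n-1}, v_n - ℏ; v; λ) = (θ(λ+nℏ)θ(ℏ)/θ(λ+(n-1)ℏ)) ∏_{m=1}^{n-1} θ(v_n - v_m - ℏ)θ(u_m - v_n) · F^(n-1)(u_1,...,u_{n-1};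 v_1,...,v_{n-1}; λ), and F^(1)(u_1;v_1;λ) = θ(u_1-v_1-λ)θ(ℏ)/θ(-λ). -/
/-!
At `u_{n+1} = v_{n+1} - ℏ` the factor `θ(u_{n+1} - v_{σ(j)} + ℏ)` with `j < n+1`,
`σ(j) = n+1` is `θ(0) = 0`, so only permutations fixing `n+1` contribute. Such a permutation
extends a permutation `π` of `{1, …, n}`, and its summand is the summand of `F^(n)` at `π` times
`∏ θ(u_m - v_{n+1})`, `∏ θ(v_{n+1} - v_m)` and a diagonal factor, which oddness of `θ` turns
into `θ(λ + (n+1)ℏ) θ(ℏ) / θ(λ + nℏ)`. The product `∏ θ(v_{n+1} - v_m)` cancels the new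
denominators of the prefactor of `F^(n+1)`.
-/
/-- The explicit elliptic weight-function formula
`F^(n)(u;v;λ) = ∏_{k>m} θ(v_k-v_m-ℏ)/θ(v_k-v_m) · Σ_{σ∈S_n}
  ∏_{l<l', σ(l)>σ(l')} θ(v_{σ(l)}-v_{σ(l')}+ℏ)/θ(v_{σ(l)}-v_{σ(l')}-ℏ)
  · ∏_{k<m} θ(u_k-v_{σ(m)}) · ∏_{k>m} θ(u_k-v_{σ(m)}+ℏ)
  · ∏_m θ(u_m-v_{σ(m)}-λ-(m-1)ℏ)θ(ℏ)/θ(-λ-(m-1)ℏ)`. -/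
noncomputable def ellF (θ : ℂ → ℂ) (h lam : ℂ) (n : ℕ) (u v : Fin n → ℂ) : ℂ :=
  (∏ p ∈ Finset.univ.filter (fun p : Fin n × Fin n => p.1 < p.2),
      θ (v p.2 - v p.1 - h) / θ (v p.2 - v p.1)) *
  ∑ σ : Equiv.Perm (Fin n),
    (∏ p ∈ Finset.univ.filter (fun p : Fin n × Fin n => p.1 < p.2 ∧ σ p.2 < σ p.1),
        θ (v (σ p.1) - v (σ p.2) + h) / θ (v (σ p.1) - v (σ p.2) - h)) *
    (∏ p ∈ Finset.univ.filter (fun p : Fin n × Fin n => p.1 < p.2),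
        θ (u p.1 - v (σ p.2))) *
    (∏ p ∈ Finset.univ.filter (fun p : Fin n × Fin n => p.2 < p.1),
        θ (u p.1 - v (σ p.2) + h)) *
    ∏ m : Fin n, θ (u m - v (σ m) - lam - (m : ℕ) * h) * θ h / θ (-lam - (m : ℕ) * h)

open Finset Equiv

theorem Equiv.Perm.sum_eq_sum_optionCongr_of_apply_none {α M : Type*} [DecidableEq α]
    [Fintype α] [AddCommMonoid M] (f : Perm (Option α) → M) (hf : ∀ σ, σ none ≠ none → f σ = 0) :
    ∑ σ, f σ = ∑ π : Perm α, f π.optionCongr := by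
  rw [← Perm.decomposeOption.symm.sum_comp, Fintype.sum_prod_type, Fintype.sum_option]
  have hsome : ∀ (a : α) (π : Perm α), f (swap none (some a) * π.optionCongr) = 0 :=
    fun a π => hf _ (by simp)
  simp [hsome, ← Perm.one_def]

def Equiv.Perm.extendLast {n : ℕ} (π : Perm (Fin n)) : Perm (Fin (n + 1)) :=
  finSuccEquivLast.symm.permCongr π.optionCongr

@[simp] theorem Equiv.Perm.extendLast_last {n : ℕ} (π : Perm (Fin n)) :
    π.extendLast (Fin.last n) = Fin.last n := by
  simp [Perm.extendLast]

@[simp] theorem Equiv.Perm.extendLast_castSucc {n : ℕ} (π : Perm (Fin n)) (i : Fin n) :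
    π.extendLast i.castSucc = (π i).castSucc := by
  simp [Perm.extendLast, finSuccEquivLast_symm_some]

theorem Equiv.Perm.sum_eq_sum_extendLast_of_apply_last {n : ℕ} {M : Type*} [AddCommMonoid M]
    (f : Perm (Fin (n + 1)) → M) (hf : ∀ σ, σ (Fin.last n) ≠ Fin.last n → f σ = 0) :
    ∑ σ, f σ = ∑ π : Perm (Fin n), f π.extendLast := by
  rw [← (finSuccEquivLast.symm.permCongr).sum_comp]
  refine Perm.sum_eq_sum_optionCongr_of_apply_none _ fun σ hσ => hf _ ?_
  rwa [permCongr_apply, symm_symm, finSuccEquivLast_last, Ne, ← finSuccEquivLast_symm_none,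
    EquivLike.apply_eq_iff_eq]

theorem Fin.prod_filter_pairs_succ {n : ℕ} {M : Type*} [CommMonoid M]
    (P : Fin (n + 1) × Fin (n + 1) → Prop) [DecidablePred P]
    (f : Fin (n + 1) × Fin (n + 1) → M) :
    ∏ p ∈ univ.filter P, f p =
      (∏ p ∈ univ.filter (fun p : Fin n × Fin n => P (p.1.castSucc, p.2.castSucc)),
          f (p.1.castSucc, p.2.castSucc)) *
        (∏ i ∈ univ.filter (fun i : Fin n => P (i.castSucc, last n)), f (i.castSucc, last n)) *
        (∏ j ∈ univ.filter (fun j : Fin n => P (last n, j.castSucc)), f (last n, j.castSucc)) *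
        (if P (last n, last n) then f (last n, last n) else 1) := by
  simp only [prod_filter, Fintype.prod_prod_type, Fin.prod_univ_castSucc, prod_mul_distrib]
  ac_rfl

theorem Fin.prod_filter_lt_pairs_succ {n : ℕ} {M : Type*} [CommMonoid M]
    (f : Fin (n + 1) × Fin (n + 1) → M) :
    ∏ p ∈ univ.filter (fun p : Fin (n + 1) × Fin (n + 1) => p.1 < p.2), f p =
      (∏ p ∈ univ.filter (fun p : Fin n × Fin n => p.1 < p.2), f (p.1.castSucc, p.2.castSucc)) *
        ∏ i : Fin n, f (i.castSucc, last n) := by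
  rw [Fin.prod_filter_pairs_succ]
  simp [Fin.castSucc_lt_last, (Fin.castSucc_lt_last _).not_gt]

section EllipticWeight

variable (θ : ℂ → ℂ) (h lam : ℂ)

noncomputable def ellWeight (n : ℕ) (u v : Fin n → ℂ) (σ : Perm (Fin n)) : ℂ :=
  (∏ p ∈ Finset.univ.filter (fun p : Fin n × Fin n => p.1 < p.2 ∧ σ p.2 < σ p.1),
      θ (v (σ p.1) - v (σ p.2) + h) / θ (v (σ p.1) - v (σ p.2) - h)) *
    (∏ p ∈ Finset.univ.filter (fun p : Fin n × Fin n => p.1 < p.2),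
      θ (u p.1 - v (σ p.2))) *
    (∏ p ∈ Finset.univ.filter (fun p : Fin n × Fin n => p.2 < p.1),
      θ (u p.1 - v (σ p.2) + h)) *
    ∏ m : Fin n, θ (u m - v (σ m) - lam - (m : ℕ) * h) * θ h / θ (-lam - (m : ℕ) * h)

theorem ellF_eq_mul_sum_ellWeight (n : ℕ) (u v : Fin n → ℂ) :
    ellF θ h lam n u v =
      (∏ p ∈ univ.filter (fun p : Fin n × Fin n => p.1 < p.2),
        θ (v p.2 - v p.1 - h) / θ (v p.2 - v p.1)) * ∑ σ, ellWeight θ h lam n u v σ :=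
  rfl

theorem ellWeight_extendLast (n : ℕ) (u v : Fin (n + 1) → ℂ) (π : Perm (Fin n)) :
    ellWeight θ h lam (n + 1) u v π.extendLast =
      ellWeight θ h lam n (u ∘ Fin.castSucc) (v ∘ Fin.castSucc) π *
        (∏ i : Fin n, θ (u i.castSucc - v (Fin.last n))) *
        (∏ j : Fin n, θ (u (Fin.last n) - v (π j).castSucc + h)) *
        (θ (u (Fin.last n) - v (Fin.last n) - lam - n * h) * θ h / θ (-lam - n * h)) := by
  simp only [ellWeight, Fin.prod_filter_pairs_succ (n := n), Fin.prod_univ_castSucc]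
  simp only [Fin.castSucc_lt_castSucc_iff, Perm.extendLast_castSucc, Perm.extendLast_last,
    Fin.castSucc_lt_last, (Fin.castSucc_lt_last _).not_gt, lt_self_iff_false, and_false, and_true,
    and_self, filter_false, filter_true, prod_empty, prod_div_distrib, ↓reduceIte, mul_one,
    Fin.val_castSucc, Fin.val_last, Function.comp_apply]
  ring

theorem ellWeight_eq_zero_of_apply_last_ne (hθ0 : θ 0 = 0) (n : ℕ) (u v : Fin (n + 1) → ℂ)
    (hu : u (Fin.last n) = v (Fin.last n) - h) (σ : Perm (Fin (n + 1)))
    (hσ : σ (Fin.last n) ≠ Fin.last n) : ellWeight θ h lam (n + 1) u v σ = 0 := by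
  have hj : σ.symm (Fin.last n) < Fin.last n :=
    (Fin.le_last _).lt_of_ne fun hj => hσ (by rw [← hj, apply_symm_apply, hj])
  have hzero : θ (u (Fin.last n) - v (σ (σ.symm (Fin.last n))) + h) = 0 := by
    rw [apply_symm_apply, hu, sub_sub_cancel_left, neg_add_cancel, hθ0]
  have hmem : (Fin.last n, σ.symm (Fin.last n)) ∈
      univ.filter (fun p : Fin (n + 1) × Fin (n + 1) => p.2 < p.1) := by
    simpa using hj
  exact mul_eq_zero_of_left (mul_eq_zero_of_right _ (prod_eq_zero hmem hzero)) _

theorem ellWeight_extendLast_of_eq (hodd : ∀ x, θ (-x) = -θ x) (n : ℕ)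
    (u v : Fin (n + 1) → ℂ) (hu : u (Fin.last n) = v (Fin.last n) - h) (π : Perm (Fin n)) :
    ellWeight θ h lam (n + 1) u v π.extendLast =
      ellWeight θ h lam n (u ∘ Fin.castSucc) (v ∘ Fin.castSucc) π *
        ((∏ i : Fin n, θ (u i.castSucc - v (Fin.last n))) *
          (∏ i : Fin n, θ (v (Fin.last n) - v i.castSucc)) *
          (θ (lam + ((n : ℂ) + 1) * h) * θ h / θ (lam + n * h))) := by
  have hdiag :
      v (Fin.last n) - h - v (Fin.last n) - lam - n * h = -(lam + ((n : ℂ) + 1) * h) := by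
    ring
  rw [ellWeight_extendLast, hu, hdiag, ← neg_add', hodd, hodd, neg_mul, neg_div_neg_eq,
    ← Equiv.prod_comp π (fun j => θ (v (Fin.last n) - v j.castSucc))]
  simp only [sub_right_comm _ h, sub_add_cancel]
  ring

theorem ellF_one (a b : ℂ) :
    ellF θ h lam 1 (fun _ => a) (fun _ => b) = θ (a - b - lam) * θ h / θ (-lam) := by
  have hlt : ∀ i j : Fin 1, ¬i < j := by decide
  simp [ellF_eq_mul_sum_ellWeight, ellWeight, hlt]

end EllipticWeight

theorem ellF_recurrence_general (n : ℕ) (θ : ℂ → ℂ)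
    (hodd : ∀ x, θ (-x) = -θ x)
    (h lam : ℂ) (u v : Fin (n + 1) → ℂ)
    (hgen1 : ∀ j k : Fin (n + 1), j ≠ k →
      θ (v j - v k) ≠ 0 ∧ θ (v j - v k - h) ≠ 0 ∧ θ (v j - v k + h) ≠ 0)
    (hu : u (Fin.last n) = v (Fin.last n) - h) :
    ellF θ h lam (n + 1) u v =
      (θ (lam + ((n : ℂ) + 1) * h) * θ h / θ (lam + (n : ℂ) * h)) *
        (∏ m : Fin n,
          θ (v (Fin.last n) - v m.castSucc - h) * θ (u m.castSucc - v (Fin.last n))) *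
        ellF θ h lam n (u ∘ Fin.castSucc) (v ∘ Fin.castSucc) ∧
    (∀ a b : ℂ, ellF θ h lam 1 (fun _ => a) (fun _ => b) =
      θ (a - b - lam) * θ h / θ (-lam)) := by
  refine ⟨?_, ellF_one θ h lam⟩
  have hθ0 : θ 0 = 0 := self_eq_neg.mp (by simpa using hodd 0)
  have hcancel : ∀ i : Fin n,
      θ (v (Fin.last n) - v i.castSucc - h) / θ (v (Fin.last n) - v i.castSucc) *
        θ (v (Fin.last n) - v i.castSucc) = θ (v (Fin.last n) - v i.castSucc - h) :=
    fun i => div_mul_cancel₀ _ (hgen1 _ _ (Fin.castSucc_lt_last i).ne').1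
  rw [ellF_eq_mul_sum_ellWeight, ellF_eq_mul_sum_ellWeight,
    Perm.sum_eq_sum_extendLast_of_apply_last _
      (ellWeight_eq_zero_of_apply_last_ne θ h lam hθ0 n u v hu),
    sum_congr rfl fun π _ => ellWeight_extendLast_of_eq θ h lam hodd n u v hu π, ← sum_mul,
    Fin.prod_filter_lt_pairs_succ, prod_mul_distrib, ← prod_congr rfl fun i _ => hcancel i,
    prod_mul_distrib]
  simp only [Function.comp_apply]
  ring

/-- `F^(n)` satisfies the Korepin-type recurrence of the SOS partition function
with DWBC at `u_{n+1} = v_{n+1} - ℏ`, together with the initial condition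
`F^(1)(u₁;v₁;λ) = θ(u₁-v₁-λ)θ(ℏ)/θ(-λ)`. -/
theorem ellF_recurrence (n : ℕ) (τ : ℂ) (hτ : 0 < τ.im) (θ : ℂ → ℂ)
    (hθd : Differentiable ℂ θ) (hodd : ∀ x, θ (-x) = -θ x)
    (hp1 : ∀ x, θ (x + 1) = -θ x)
    (hp2 : ∀ x, θ (x + τ) =
      -Complex.exp (-(2 * (Real.pi : ℂ) * Complex.I * x) - (Real.pi : ℂ) * Complex.I * τ) * θ x)
    (hd0 : HasDerivAt θ 1 0)
    (h lam : ℂ) (u v : Fin (n + 1) → ℂ)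
    (hgen1 : ∀ j k : Fin (n + 1), j ≠ k →
      θ (v j - v k) ≠ 0 ∧ θ (v j - v k - h) ≠ 0 ∧ θ (v j - v k + h) ≠ 0)
    (hgen2 : ∀ m : Fin (n + 1), θ (-lam - (m : ℕ) * h) ≠ 0)
    (hu : u (Fin.last n) = v (Fin.last n) - h) :
    ellF θ h lam (n + 1) u v =
      (θ (lam + ((n : ℂ) + 1) * h) * θ h / θ (lam + (n : ℂ) * h)) *
        (∏ m : Fin n,
          θ (v (Fin.last n) - v m.castSucc - h) * θ (u m.castSucc - v (Fin.last n))) *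
        ellF θ h lam n (u ∘ Fin.castSucc) (v ∘ Fin.castSucc) ∧
    (∀ a b : ℂ, ellF θ h lam 1 (fun _ => a) (fun _ => b) =
      θ (a - b - lam) * θ h / θ (-lam)) :=
  ellF_recurrence_general n θ hodd h lam u v hgen1 hu
end

section
/- For each variable u_n, the function Z^(n)(u;v) given by the q-symmetrized sum formula above is a polynomial in u_n of degree n-1, and it is symmetric under permutations of the variables v_1,...,v_n. -/
/-- The projection-method formula for the partition function of the finite
6-vertex model with domain wall boundary conditions:
`Z^(n)(u;v) = (q-q⁻¹)^n ∏_m v_m ∏_{k>j} (q⁻¹v_k - qv_j)/(v_k - v_j)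
  · Σ_{σ∈S_n} ∏_{i<j, σ(i)>σ(j)} (qv_{σ(i)} - q⁻¹v_{σ(j)})/(q⁻¹v_{σ(i)} - qv_{σ(j)})
  · ∏_{i>k} (qu_i - q⁻¹v_{σ(k)}) · ∏_{i<k} (u_i - v_{σ(k)})`. -/
noncomputable def z6 (q : ℂ) (n : ℕ) (u v : Fin n → ℂ) : ℂ :=
  (q - q⁻¹) ^ n * (∏ m, v m) *
  (∏ p ∈ Finset.univ.filter (fun p : Fin n × Fin n => p.1 < p.2),
      (q⁻¹ * v p.2 - q * v p.1) / (v p.2 - v p.1)) *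
  ∑ σ : Equiv.Perm (Fin n),
    (∏ p ∈ Finset.univ.filter (fun p : Fin n × Fin n => p.1 < p.2 ∧ σ p.2 < σ p.1),
        (q * v (σ p.1) - q⁻¹ * v (σ p.2)) / (q⁻¹ * v (σ p.1) - q * v (σ p.2))) *
    (∏ p ∈ Finset.univ.filter (fun p : Fin n × Fin n => p.2 < p.1),
        (q * u p.1 - q⁻¹ * v (σ p.2))) *
    (∏ p ∈ Finset.univ.filter (fun p : Fin n × Fin n => p.1 < p.2),
        (u p.1 - v (σ p.2)))

/-! In every summand the variable `u_{i₀}` occurs in exactly one linear factor for each `k ≠ i₀`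
(through `q u_{i₀} - q⁻¹ v_{σ k}` for `k < i₀` and `u_{i₀} - v_{σ k}` for `k > i₀`), so `Z^(n)` is
a polynomial of degree `n - 1` in `u_{i₀}`.

For the symmetry, the inversion factor `(q a - q⁻¹ b)/(q⁻¹ a - q b)` of a pair is exactly what
turns the factor `(q⁻¹ a - q b)/(a - b)` of the prefactor into `(q⁻¹ b - q a)/(b - a)`. Hence the
prefactor times the inversion product of `σ` is the prefactor evaluated at `v ∘ σ`, and
`Z^(n) = (q - q⁻¹)^n ∏ v_m · ∑_σ F(v ∘ σ)` is the symmetrization of a single function `F`. -/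

open Finset

def IsPolynomialOfNatDegreeLE {R : Type*} [CommRing R] (f : R → R) (d : ℕ) : Prop :=
  ∃ p : Polynomial R, p.natDegree ≤ d ∧ ∀ w, f w = p.eval w

namespace IsPolynomialOfNatDegreeLE

variable {R ι : Type*} [CommRing R] {f g : R → R} {d e : ℕ}

theorem mono (hf : IsPolynomialOfNatDegreeLE f d) (h : d ≤ e) :
    IsPolynomialOfNatDegreeLE f e :=
  let ⟨p, hp, hfp⟩ := hf
  ⟨p, hp.trans h, hfp⟩

theorem const (c : R) (d : ℕ) : IsPolynomialOfNatDegreeLE (fun _ => c) d :=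
  ⟨Polynomial.C c, by simp, by simp⟩

theorem id : IsPolynomialOfNatDegreeLE (fun w : R => w) 1 :=
  ⟨Polynomial.X, Polynomial.natDegree_X_le, by simp⟩

theorem sub (hf : IsPolynomialOfNatDegreeLE f d) (hg : IsPolynomialOfNatDegreeLE g d) :
    IsPolynomialOfNatDegreeLE (fun w => f w - g w) d :=
  let ⟨p, hp, hfp⟩ := hf
  let ⟨r, hr, hgr⟩ := hg
  ⟨p - r, (Polynomial.natDegree_sub_le p r).trans (max_le hp hr), by simp [hfp, hgr]⟩

theorem mul (hf : IsPolynomialOfNatDegreeLE f d) (hg : IsPolynomialOfNatDegreeLE g e) :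
    IsPolynomialOfNatDegreeLE (fun w => f w * g w) (d + e) :=
  let ⟨p, hp, hfp⟩ := hf
  let ⟨r, hr, hgr⟩ := hg
  ⟨p * r, Polynomial.natDegree_mul_le.trans (add_le_add hp hr), by simp [hfp, hgr]⟩

theorem const_mul (c : R) (hf : IsPolynomialOfNatDegreeLE f d) :
    IsPolynomialOfNatDegreeLE (fun w => c * f w) d := by
  simpa using (const c 0).mul hf

theorem prod {s : Finset ι} {f : ι → R → R} {d : ι → ℕ}
    (hf : ∀ i ∈ s, IsPolynomialOfNatDegreeLE (f i) (d i)) :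
    IsPolynomialOfNatDegreeLE (fun w => ∏ i ∈ s, f i w) (∑ i ∈ s, d i) := by
  choose! p hp hfp using hf
  exact ⟨∏ i ∈ s, p i, (Polynomial.natDegree_prod_le s p).trans (sum_le_sum hp),
    fun w => by rw [Polynomial.eval_prod]; exact prod_congr rfl fun i hi => hfp i hi w⟩

theorem sum {s : Finset ι} {f : ι → R → R}
    (hf : ∀ i ∈ s, IsPolynomialOfNatDegreeLE (f i) d) :
    IsPolynomialOfNatDegreeLE (fun w => ∑ i ∈ s, f i w) d := by
  choose! p hp hfp using hf
  exact ⟨∑ i ∈ s, p i, Polynomial.natDegree_sum_le_of_forall_le s p hp,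
    fun w => by rw [Polynomial.eval_finsetSum]; exact sum_congr rfl fun i hi => hfp i hi w⟩

theorem update {α : Type*} [DecidableEq α] (u : α → R) (a b : α) :
    IsPolynomialOfNatDegreeLE (fun w => Function.update u a w b) (if b = a then 1 else 0) := by
  by_cases h : b = a
  · subst h; simpa using id
  · simpa [h] using const (u b) 0

end IsPolynomialOfNatDegreeLE

theorem Fin.sum_ite_fst_eq_over_gt_add_lt (n : ℕ) (i₀ : Fin n) :
    (∑ p ∈ univ.filter (fun p : Fin n × Fin n => p.2 < p.1), if p.1 = i₀ then 1 else 0) +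
    (∑ p ∈ univ.filter (fun p : Fin n × Fin n => p.1 < p.2), if p.1 = i₀ then 1 else 0) =
      n - 1 := by
  simp_rw [sum_filter, Fintype.sum_prod_type, ← ite_and, and_comm (b := _ = i₀), ite_and]
  simp only [sum_ite_irrel, sum_const_zero, sum_ite_eq', mem_univ, if_true, sum_boole,
    Nat.cast_id, filter_gt_eq_Iio, filter_lt_eq_Ioi, Fin.card_Iio, Fin.card_Ioi]
  omega

theorem isPolynomialOfNatDegreeLE_z6_update (q : ℂ) {n : ℕ} (u v : Fin n → ℂ) (i₀ : Fin n) :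
    IsPolynomialOfNatDegreeLE (fun w => z6 q n (Function.update u i₀ w) v) (n - 1) := by
  open IsPolynomialOfNatDegreeLE in
  refine const_mul _ (sum fun σ _ => ?_)
  refine (((const _ 0).mul (prod fun p _ => (const_mul q (update u i₀ p.1)).sub (const _ _))).mul
    (prod fun p _ => (update u i₀ p.1).sub (const _ _))).mono ?_
  rw [zero_add, Fin.sum_ite_fst_eq_over_gt_add_lt]

section LtPairs

variable {α : Type*} [Fintype α] [LinearOrder α]

theorem prod_lt_pairs_min_max_perm {M : Type*} [CommMonoid M] (f : α → α → M)
    (σ : Equiv.Perm α) :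
    ∏ p ∈ univ.filter (fun p : α × α => p.1 < p.2),
        f (min (σ p.1) (σ p.2)) (max (σ p.1) (σ p.2)) =
      ∏ p ∈ univ.filter (fun p : α × α => p.1 < p.2), f p.1 p.2 := by
  set pairs := univ.filter (fun p : α × α => p.1 < p.2)
  let sortAfter (τ : Equiv.Perm α) (p : α × α) : α × α :=
    (min (τ p.1) (τ p.2), max (τ p.1) (τ p.2))
  have maps : ∀ τ : Equiv.Perm α, ∀ p ∈ pairs, sortAfter τ p ∈ pairs := by
    intro τ p hp
    simp only [pairs, mem_filter, mem_univ, true_and] at hp ⊢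
    exact min_lt_max.2 (τ.injective.ne hp.ne)
  have inv : ∀ τ : Equiv.Perm α, ∀ p ∈ pairs, sortAfter τ⁻¹ (sortAfter τ p) = p := by
    intro τ p hp
    simp only [pairs, mem_filter, mem_univ, true_and] at hp
    rcases le_total (τ p.1) (τ p.2) with h | h <;> simp [sortAfter, h, hp.le]
  exact prod_nbij' (sortAfter σ) (sortAfter σ⁻¹) (maps σ) (maps σ⁻¹) (inv σ)
    (by simpa using inv σ⁻¹) fun _ _ => rfl

variable {K : Type*} [Field K]

def qVandermondeRatio (q : K) (v : α → K) : K :=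
  ∏ p ∈ univ.filter (fun p : α × α => p.1 < p.2), (q⁻¹ * v p.2 - q * v p.1) / (v p.2 - v p.1)

theorem qVandermonde_factor_swap {q a b : K} (h : q⁻¹ * a - q * b ≠ 0) :
    (q⁻¹ * a - q * b) / (a - b) * ((q * a - q⁻¹ * b) / (q⁻¹ * a - q * b)) =
      (q⁻¹ * b - q * a) / (b - a) := by
  rw [mul_comm, div_mul_div_cancel₀ h, ← neg_div_neg_eq, neg_sub, neg_sub]

theorem qVandermondeRatio_mul_prod_inversions {q : K} {v : α → K}
    (hv : ∀ i j, i ≠ j → q⁻¹ * v i - q * v j ≠ 0) (σ : Equiv.Perm α) :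
    qVandermondeRatio q v *
        ∏ p ∈ univ.filter (fun p : α × α => p.1 < p.2 ∧ σ p.2 < σ p.1),
          (q * v (σ p.1) - q⁻¹ * v (σ p.2)) / (q⁻¹ * v (σ p.1) - q * v (σ p.2)) =
      qVandermondeRatio q (v ∘ σ) := by
  rw [qVandermondeRatio,
    ← prod_lt_pairs_min_max_perm (fun i j => (q⁻¹ * v j - q * v i) / (v j - v i)) σ,
    ← filter_filter, prod_filter (fun p : α × α => σ p.2 < σ p.1), ← prod_mul_distrib]
  refine prod_congr rfl fun p hp => ?_
  have hp : p.1 < p.2 := (mem_filter.1 hp).2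
  rcases lt_or_gt_of_ne (σ.injective.ne hp.ne) with h | h
  · simp [h.le, not_lt.2 h.le]
  · rw [min_eq_right h.le, max_eq_left h.le, if_pos h]
    exact qVandermonde_factor_swap (hv _ _ h.ne')

end LtPairs

theorem sum_perm_comp_perm {α β M : Type*} [Fintype α] [DecidableEq α] [AddCommMonoid M]
    (G : (α → β) → M) (v : α → β) (τ : Equiv.Perm α) :
    ∑ σ : Equiv.Perm α, G (v ∘ τ ∘ σ) = ∑ σ : Equiv.Perm α, G (v ∘ σ) :=
  Equiv.sum_comp (Equiv.mulLeft τ) fun σ => G (v ∘ σ)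

noncomputable def z6Summand (q : ℂ) {n : ℕ} (u w : Fin n → ℂ) : ℂ :=
  qVandermondeRatio q w *
    (∏ p ∈ univ.filter (fun p : Fin n × Fin n => p.2 < p.1), (q * u p.1 - q⁻¹ * w p.2)) *
    ∏ p ∈ univ.filter (fun p : Fin n × Fin n => p.1 < p.2), (u p.1 - w p.2)

theorem z6_eq_sum_perm_comp {q : ℂ} {n : ℕ} (u v : Fin n → ℂ)
    (hv : ∀ i j, i ≠ j → q⁻¹ * v i - q * v j ≠ 0) :
    z6 q n u v = (q - q⁻¹) ^ n * (∏ m, v m) * ∑ σ : Equiv.Perm (Fin n), z6Summand q u (v ∘ σ) := by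
  rw [z6, mul_assoc _ _ (∑ _, _), mul_sum]
  congr 1
  refine sum_congr rfl fun σ _ => ?_
  rw [z6Summand, ← qVandermondeRatio_mul_prod_inversions hv σ, qVandermondeRatio]
  simp only [mul_assoc, Function.comp_apply]

theorem z6_polynomial_and_symmetric_general (q : ℂ) (n : ℕ)
    (u v : Fin n → ℂ)
    (hgen : ∀ i j : Fin n, i ≠ j → v i ≠ v j ∧ q⁻¹ * v i - q * v j ≠ 0) :
    (∀ i₀ : Fin n, ∃ p : Polynomial ℂ, p.natDegree ≤ n - 1 ∧
      ∀ w : ℂ, z6 q n (Function.update u i₀ w) v = p.eval w) ∧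
    (∀ σ : Equiv.Perm (Fin n), z6 q n u (v ∘ ⇑σ) = z6 q n u v) := by
  refine ⟨isPolynomialOfNatDegreeLE_z6_update q u v, fun τ => ?_⟩
  have hv : ∀ i j, i ≠ j → q⁻¹ * v i - q * v j ≠ 0 := fun i j h => (hgen i j h).2
  rw [z6_eq_sum_perm_comp u v hv,
    z6_eq_sum_perm_comp u (v ∘ τ) fun i j h => hv _ _ (τ.injective.ne h)]
  simp only [Function.comp_apply, Equiv.prod_comp]
  exact congrArg _ (sum_perm_comp_perm (z6Summand q u) v τ)

/-- `Z^(n)(u;v)` is a polynomial of degree `n-1` in each variable `u_{i₀}` and is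
symmetric under permutations of the variables `v_1,...,v_n` (at generic `v`). -/
theorem z6_polynomial_and_symmetric (q : ℂ) (hq : q ≠ 0) (hq2 : q ^ 2 ≠ 1) (n : ℕ)
    (u v : Fin n → ℂ)
    (hgen : ∀ i j : Fin n, i ≠ j → v i ≠ v j ∧ q⁻¹ * v i - q * v j ≠ 0) :
    (∀ i₀ : Fin n, ∃ p : Polynomial ℂ, p.natDegree ≤ n - 1 ∧
      ∀ w : ℂ, z6 q n (Function.update u i₀ w) v = p.eval w) ∧
    (∀ σ : Equiv.Perm (Fin n), z6 q n u (v ∘ ⇑σ) = z6 q n u v) :=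
  z6_polynomial_and_symmetric_general q n u v hgen
end
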